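/- arXiv:1209.6026 — 11 statements merged into one kernel-verified Lean document; each statement's English description precedes it below -/
import Mathlib

section
/- Let p and q be distinct primes. Then the polynomial (1 - x^{p·(p⁻¹ mod q)}) + (x^{pq} - x^{q·(q⁻¹ mod p)}) - (1 - x) is divisible by (1-x^p)(1-x^q) in ℤ[x]. -/
open Polynomial

/-- For distinct primes `p` and `q`, the polynomial
`(1 - x^(p·(p⁻¹ mod q))) + (x^(pq) - x^(q·(q⁻¹ mod p))) - (1 - x)`
is divisible by `(1 - x^p)(1 - x^q)` in `ℤ[x]`. -/
theorem stmt1 (p q : ℕ) (hp : p.Prime) (hq : q.Prime) (hpq : p ≠ q) :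
    ((1 - X ^ p) * (1 - X ^ q) : Polynomial ℤ) ∣
      ((1 - X ^ (p * ((p : ZMod q)⁻¹).val)) +
        (X ^ (p * q) - X ^ (q * ((q : ZMod p)⁻¹).val)) - (1 - X)) := by
  haveI : Fact p.Prime := ⟨hp⟩
  haveI : Fact q.Prime := ⟨hq⟩
  set a := ((p : ZMod q)⁻¹).val with ha
  set b := ((q : ZMod p)⁻¹).val with hb
  have hcop : Nat.Coprime p q := (Nat.coprime_primes hp hq).mpr hpq
  -- p * a ≡ 1 mod q
  have h1 : ((p * a : ℕ) : ZMod q) = 1 := by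
    push_cast
    rw [ha, ZMod.natCast_val, ZMod.cast_id]
    exact ZMod.coe_mul_inv_eq_one p hcop
  have h2 : ((q * b : ℕ) : ZMod p) = 1 := by
    push_cast
    rw [hb, ZMod.natCast_val, ZMod.cast_id]
    exact ZMod.coe_mul_inv_eq_one q hcop.symm
  have hm1 : 1 ≤ p * a := by
    by_contra h
    push_neg at h
    interval_cases h' : p * a
    · simp at h1
  have hn1 : 1 ≤ q * b := by
    by_contra h
    push_neg at h
    interval_cases h' : q * b
    · simp at h2
  have hqm : q ∣ p * a - 1 :=
    (Nat.modEq_iff_dvd' hm1).mp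
      (((ZMod.natCast_eq_natCast_iff _ _ _).mp (by rw [h1, Nat.cast_one])).symm)
  have hpn : p ∣ q * b - 1 :=
    (Nat.modEq_iff_dvd' hn1).mp
      (((ZMod.natCast_eq_natCast_iff _ _ _).mp (by rw [h2, Nat.cast_one])).symm)
  obtain ⟨c, hc⟩ := hqm
  obtain ⟨d, hd⟩ := hpn
  have hc' : p * a = q * c + 1 := by
    rw [← hc]; omega
  have hd' : q * b = p * d + 1 := by
    rw [← hd]; omega
  have hav : a < q := ZMod.val_lt _
  have hbv : b < p := ZMod.val_lt _
  -- q*(c+b) = p*(a+d)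
  have key : q * (c + b) = p * (a + d) := by
    have e1 : q * (c + b) = q * c + q * b := by ring
    have e2 : p * (a + d) = p * a + p * d := by ring
    rw [e1, e2, hc', hd']; ring
  have hpe : p ∣ c + b := by
    have : p ∣ q * (c + b) := key ▸ Dvd.intro _ rfl
    exact (Nat.Coprime.dvd_of_dvd_mul_left hcop this)
  obtain ⟨e, he⟩ := hpe
  have hub : p * a + q * b < 2 * (p * q) := by
    have h3 : p * a ≤ p * (q - 1) := Nat.mul_le_mul_left p (by omega)
    have h4 : q * b ≤ q * (p - 1) := Nat.mul_le_mul_left q (by omega)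
    have hp2 := hp.two_le
    have hq2 := hq.two_le
    nlinarith
  have hsum : p * a + q * b = p * q + 1 := by
    have hcalc : p * a + q * b = q * (c + b) + 1 := by rw [hc']; ring
    rw [he] at hcalc
    have hpos : 0 < p * q := Nat.mul_pos hp.pos hq.pos
    have he1 : e = 1 := by
      by_contra hne
      rcases Nat.lt_or_ge e 1 with h | h
      · have he0 : e = 0 := by omega
        subst he0
        simp only [Nat.mul_zero] at hcalc
        linarith
      · have h2 : 2 ≤ e := by omega
        have hle : 2 * (p * q) ≤ q * (p * e) := by
          nlinarith [hp.pos, hq.pos]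
        linarith
    rw [he1] at hcalc
    rw [hcalc]; ring
  have hpqe : p * q = q * c + p * d + 1 := by
    rw [hc', hd'] at hsum; linarith
  rw [hc', hd', hpqe]
  have factor : ((1 - X ^ (q * c + 1)) +
      (X ^ (q * c + p * d + 1) - X ^ (p * d + 1)) - (1 - X) : Polynomial ℤ) =
      ((1 - X ^ (p * d)) * (1 - X ^ (q * c))) * X := by
    ring
  rw [factor]
  have d1 : ((1 - X ^ p : Polynomial ℤ)) ∣ (1 - X ^ (p * d)) := by
    rw [pow_mul]
    simpa using sub_dvd_pow_sub_pow (1 : Polynomial ℤ) (X ^ p) d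
  have d2 : ((1 - X ^ q : Polynomial ℤ)) ∣ (1 - X ^ (q * c)) := by
    rw [pow_mul]
    simpa using sub_dvd_pow_sub_pow (1 : Polynomial ℤ) (X ^ q) c
  exact (mul_dvd_mul d1 d2).mul_right X
end

section
/- Let N = p₁p₂⋯pₙ be a product of n ≥ 2 distinct primes, and set N_i = N/p_i and N_{ij} = N/(p_ip_j). Then the rational function P_N(x) = (1-x^N)·∏_{1≤i<j≤n}(1-x^{N_{ij}}) / ∏_{i=1}^n (1-x^{N_i}) is a polynomial with integer coefficients. -/
open Polynomial Finset

private lemma aux_count_divisors (d m : ℕ) :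
    Multiset.count d (m.divisors.val) = if d ∈ m.divisors then 1 else 0 := by
  split
  · exact Multiset.count_eq_one_of_mem m.divisors.nodup ‹_›
  · exact Multiset.count_eq_zero_of_notMem ‹_›

private lemma aux_map_sum_multiset {ι β : Type*} (s : Finset ι) (M : ι → Multiset ℕ)
    (f : ℕ → β) : (∑ i ∈ s, M i).map f = ∑ i ∈ s, (M i).map f := by
  induction s using Finset.cons_induction with
  | empty => simp
  | cons a s h ih => simp [Finset.sum_cons, ih]

/-- For `N = p₁⋯pₙ` a product of `n ≥ 2` distinct primes, the rational function
`P_N(x) = (1-x^N)·∏_{i<j}(1-x^{N/(p_i p_j)}) / ∏_i (1-x^{N/p_i})` is a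
polynomial with integer coefficients, i.e. the denominator divides the
numerator in `ℤ[x]`. -/
theorem stmt2 (n : ℕ) (hn : 2 ≤ n) (p : Fin n → ℕ)
    (hp : ∀ i, (p i).Prime) (hinj : Function.Injective p)
    (N : ℕ) (hN : N = ∏ i, p i) :
    (∏ i, (1 - X ^ (N / p i)) : Polynomial ℤ) ∣
      (1 - X ^ N) * ∏ i, ∏ j ∈ Finset.Ioi i, (1 - X ^ (N / (p i * p j))) := by
  classical
  have hinj' : ∀ i j, p i ∣ p j → i = j := fun i j h =>
    hinj ((Nat.prime_dvd_prime_iff_eq (hp i) (hp j)).mp h)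
  have hNpos : 0 < N := hN ▸ Finset.prod_pos fun i _ => (hp i).pos
  -- key characterization of divisibility of N / ∏_{i ∈ s} p i
  have key : ∀ (s : Finset (Fin n)) (d : ℕ), d ∣ N →
      (d ∣ N / ∏ i ∈ s, p i ↔ ∀ i ∈ s, ¬ p i ∣ d) := by
    intro s d hd
    have hsplit : (∏ i ∈ univ \ s, p i) * ∏ i ∈ s, p i = N := by
      rw [hN]; exact Finset.prod_sdiff (subset_univ s)
    have hdiv : N / ∏ i ∈ s, p i = ∏ i ∈ univ \ s, p i := by
      rw [← hsplit, Nat.mul_div_cancel _ (Finset.prod_pos fun i _ => (hp i).pos)]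
    rw [hdiv]
    constructor
    · intro h i hi hpd
      have hdd : p i ∣ ∏ j ∈ univ \ s, p j := hpd.trans h
      obtain ⟨j, hj, hij⟩ := ((hp i).prime.dvd_finset_prod_iff _).mp hdd
      have hij' := hinj' i j hij
      subst hij'
      exact (Finset.mem_sdiff.mp hj).2 hi
    · intro h
      have hcop : Nat.Coprime d (∏ i ∈ s, p i) :=
        Nat.Coprime.prod_right fun i hi => ((hp i).coprime_iff_not_dvd.mpr (h i hi)).symm
      have hd' : d ∣ (∏ i ∈ univ \ s, p i) * ∏ i ∈ s, p i := hsplit ▸ hd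
      exact hcop.dvd_of_dvd_mul_right hd'
  have hNi_dvd : ∀ i, p i ∣ N := fun i => hN ▸ Finset.dvd_prod_of_mem p (mem_univ i)
  have hNi_pos : ∀ i, 0 < N / p i := fun i =>
    Nat.div_pos (Nat.le_of_dvd hNpos (hNi_dvd i)) (hp i).pos
  have hdvd_pair : ∀ i j : Fin n, i ≠ j → p i * p j ∣ N := by
    intro i j hne
    rw [hN, ← Finset.prod_pair hne]
    exact Finset.prod_dvd_prod_of_subset _ _ _ (subset_univ _)
  have hNij_pos : ∀ i j : Fin n, i ≠ j → 0 < N / (p i * p j) := fun i j hne =>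
    Nat.div_pos (Nat.le_of_dvd hNpos (hdvd_pair i j hne))
      (Nat.mul_pos (hp i).pos (hp j).pos)
  -- membership in divisors
  have mem1 : ∀ (d : ℕ) (i : Fin n),
      d ∈ (N / p i).divisors ↔ d ∣ N ∧ ¬ p i ∣ d := by
    intro d i
    rw [Nat.mem_divisors]
    constructor
    · rintro ⟨h1, _⟩
      have hdN : d ∣ N := h1.trans (Nat.div_dvd_of_dvd (hNi_dvd i))
      refine ⟨hdN, ?_⟩
      have := (key {i} d hdN).mp (by simpa using h1)
      simpa using this
    · rintro ⟨hdN, h2⟩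
      refine ⟨?_, (hNi_pos i).ne'⟩
      have := (key {i} d hdN).mpr (by simpa using h2)
      simpa using this
  have mem2 : ∀ (d : ℕ) (i j : Fin n), i ≠ j →
      (d ∈ (N / (p i * p j)).divisors ↔ d ∣ N ∧ (¬ p i ∣ d ∧ ¬ p j ∣ d)) := by
    intro d i j hne
    have hpair : (∏ k ∈ ({i, j} : Finset (Fin n)), p k) = p i * p j :=
      Finset.prod_pair hne
    rw [Nat.mem_divisors]
    constructor
    · rintro ⟨h1, _⟩
      have hdN : d ∣ N := h1.trans (Nat.div_dvd_of_dvd (hdvd_pair i j hne))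
      refine ⟨hdN, ?_⟩
      have := (key {i, j} d hdN).mp (by rw [hpair]; exact h1)
      constructor
      · exact this i (by simp)
      · exact this j (by simp)
    · rintro ⟨hdN, h2, h3⟩
      refine ⟨?_, (hNij_pos i j hne).ne'⟩
      have := (key {i, j} d hdN).mpr (by
        intro k hk
        rcases Finset.mem_insert.mp hk with rfl | hk
        · exact h2
        · rw [Finset.mem_singleton.mp hk]; exact h3)
      rwa [hpair] at this
  -- the multiset inequality
  have hmulti : (∑ i, (N / p i).divisors.val) ≤
      N.divisors.val + ∑ i : Fin n, ∑ j ∈ Ioi i, (N / (p i * p j)).divisors.val := by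
    rw [Multiset.le_iff_count]
    intro d
    rw [Multiset.count_add, Multiset.count_sum', Multiset.count_sum']
    simp_rw [Multiset.count_sum', aux_count_divisors]
    by_cases hd : d ∣ N
    · -- d divides N
      have hdN : d ∈ N.divisors := Nat.mem_divisors.mpr ⟨hd, hNpos.ne'⟩
      rw [if_pos hdN]
      have lhs_eq : (∑ i : Fin n, if d ∈ (N / p i).divisors then 1 else 0) =
          (univ.filter fun i : Fin n => ¬ p i ∣ d).card := by
        rw [Finset.card_filter]
        refine Finset.sum_congr rfl fun i _ => ?_
        congr 1
        simp only [eq_iff_iff, mem1 d i]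
        exact ⟨fun h => h.2, fun h => ⟨hd, h⟩⟩
      rw [lhs_eq]
      set B := univ.filter fun i : Fin n => ¬ p i ∣ d with hB
      rcases B.eq_empty_or_nonempty with hE | hNe
      · rw [hE]; simp
      · set b := B.min' hNe with hb
        have hbB : b ∈ B := B.min'_mem hNe
        have hbd : ¬ p b ∣ d := (Finset.mem_filter.mp hbB).2
        have step1 : (∑ j ∈ Ioi b, if d ∈ (N / (p b * p j)).divisors then 1 else 0) ≤
            ∑ i : Fin n, ∑ j ∈ Ioi i, if d ∈ (N / (p i * p j)).divisors then 1 else 0 :=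
          Finset.single_le_sum (f := fun i => ∑ j ∈ Ioi i,
            if d ∈ (N / (p i * p j)).divisors then 1 else 0)
            (fun i _ => Nat.zero_le _) (mem_univ b)
        have step2 : (B.erase b).card ≤
            ∑ j ∈ Ioi b, if d ∈ (N / (p b * p j)).divisors then 1 else 0 := by
          have inner_eq : (∑ j ∈ Ioi b, if d ∈ (N / (p b * p j)).divisors then 1 else 0) =
              ((Ioi b).filter fun j => ¬ p j ∣ d).card := by
            rw [Finset.card_filter]
            refine Finset.sum_congr rfl fun j hj => ?_
            have hne : b ≠ j := (Finset.mem_Ioi.mp hj).ne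
            congr 1
            simp only [eq_iff_iff, mem2 d b j hne]
            exact ⟨fun h => h.2.2, fun h => ⟨hd, hbd, h⟩⟩
          rw [inner_eq]
          refine Finset.card_le_card ?_
          intro j hj
          obtain ⟨hjb, hjB⟩ := Finset.mem_erase.mp hj
          refine Finset.mem_filter.mpr ⟨Finset.mem_Ioi.mpr ?_, (Finset.mem_filter.mp hjB).2⟩
          exact lt_of_le_of_ne (B.min'_le j hjB) (Ne.symm hjb)
        have hcard : 1 ≤ B.card := Finset.card_pos.mpr hNe
        have := le_trans step2 step1
        rw [Finset.card_erase_of_mem hbB] at this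
        omega
    · -- d does not divide N : left side is zero
      have : ∀ i : Fin n, d ∉ (N / p i).divisors := fun i h =>
        hd ((Nat.mem_divisors.mp h).1.trans (Nat.div_dvd_of_dvd (hNi_dvd i)))
      simp [this]
  -- main divisibility for the (X^m - 1) versions, via cyclotomic polynomials
  have e1 : ∀ m : ℕ, 0 < m →
      (X : Polynomial ℤ) ^ m - 1 =
        ((m.divisors.val).map fun d => cyclotomic d ℤ).prod := by
    intro m hm
    rw [← prod_cyclotomic_eq_X_pow_sub_one hm, Finset.prod_eq_multiset_prod]
  have step : (∏ i, ((X : Polynomial ℤ) ^ (N / p i) - 1)) ∣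
      ((X : Polynomial ℤ) ^ N - 1) *
        ∏ i, ∏ j ∈ Ioi i, ((X : Polynomial ℤ) ^ (N / (p i * p j)) - 1) := by
    calc (∏ i, ((X : Polynomial ℤ) ^ (N / p i) - 1))
        = ((∑ i, (N / p i).divisors.val).map fun d => cyclotomic d ℤ).prod := by
          rw [aux_map_sum_multiset, Multiset.prod_sum]
          exact Finset.prod_congr rfl fun i _ => e1 _ (hNi_pos i)
      _ ∣ ((N.divisors.val +
            ∑ i : Fin n, ∑ j ∈ Ioi i, (N / (p i * p j)).divisors.val).map
              fun d => cyclotomic d ℤ).prod :=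
          Multiset.prod_dvd_prod_of_le (Multiset.map_le_map hmulti)
      _ = ((X : Polynomial ℤ) ^ N - 1) *
            ∏ i, ∏ j ∈ Ioi i, ((X : Polynomial ℤ) ^ (N / (p i * p j)) - 1) := by
          rw [Multiset.map_add, Multiset.prod_add, aux_map_sum_multiset, Multiset.prod_sum]
          congr 1
          · exact (e1 N hNpos).symm
          · refine Finset.prod_congr rfl fun i _ => ?_
            rw [aux_map_sum_multiset, Multiset.prod_sum]
            refine Finset.prod_congr rfl fun j hj => ?_
            exact (e1 _ (hNij_pos i j (Finset.mem_Ioi.mp hj).ne)).symm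
  -- transfer between 1 - X^m and X^m - 1 (they are associates)
  have neg1 : ∀ m : ℕ, ((1 : Polynomial ℤ) - X ^ m) ∣ (X ^ m - 1) := fun m => ⟨-1, by ring⟩
  have neg2 : ∀ m : ℕ, ((X : Polynomial ℤ) ^ m - 1) ∣ (1 - X ^ m) := fun m => ⟨-1, by ring⟩
  calc (∏ i, (1 - X ^ (N / p i)) : Polynomial ℤ)
      ∣ ∏ i, ((X : Polynomial ℤ) ^ (N / p i) - 1) :=
        Finset.prod_dvd_prod_of_dvd _ _ fun i _ => neg1 _
    _ ∣ ((X : Polynomial ℤ) ^ N - 1) *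
          ∏ i, ∏ j ∈ Ioi i, ((X : Polynomial ℤ) ^ (N / (p i * p j)) - 1) := step
    _ ∣ (1 - X ^ N) * ∏ i, ∏ j ∈ Finset.Ioi i, (1 - X ^ (N / (p i * p j))) :=
        mul_dvd_mul (neg2 N) (Finset.prod_dvd_prod_of_dvd _ _ fun i _ =>
          Finset.prod_dvd_prod_of_dvd _ _ fun j _ => neg2 _)
end

section
/- Let p, q be distinct primes. Modulo 1 - x^{pq}, the cyclotomic polynomial Φ_{pq}(x) is congruent to ((1-x^{pq})/(1-x^q))·((1-x^{p·(p⁻¹ mod q)})/(1-x^p)) + ((1-x^{pq})/(1-x^p))·((x^{pq}-x^{q·(q⁻¹ mod p)})/(1-x^q)). -/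
open Polynomial Finset



lemma geo (d k : ℕ) :
    (∑ i ∈ Finset.range k, (X : Polynomial ℤ) ^ (d * i)) * (X ^ d - 1) = X ^ (d * k) - 1 := by
  have := geom_sum_mul ((X : Polynomial ℤ) ^ d) k
  simpa [← pow_mul] using this

lemma Xp1_ne (n : ℕ) (hn : n ≠ 0) : ((X : Polynomial ℤ) ^ n - 1) ≠ 0 := by
  have := (monic_X_pow_sub_C (1 : ℤ) hn).ne_zero
  simpa using this

lemma hdiv (p q : ℕ) (hp : p.Prime) (hq : q.Prime) (hpq : p ≠ q) :
    (p * q).divisors = {1, p, q, p * q} := by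
  rw [Nat.divisors_mul, hp.divisors, hq.divisors]
  ext d
  simp only [Finset.mem_mul, Finset.mem_insert, Finset.mem_singleton]
  constructor
  · rintro ⟨x, (rfl | rfl), y, (rfl | rfl), rfl⟩ <;> simp
  · rintro (h | h | h | h)
    · exact ⟨1, Or.inl rfl, 1, Or.inl rfl, by simp [h]⟩
    · exact ⟨p, Or.inr rfl, 1, Or.inl rfl, by simp [h]⟩
    · exact ⟨1, Or.inl rfl, q, Or.inr rfl, by simp [h]⟩
    · exact ⟨p, Or.inr rfl, q, Or.inr rfl, by simp [h]⟩

lemma cyclo_prime_mul (n : ℕ) (hn : n.Prime) :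
    cyclotomic 1 ℤ * cyclotomic n ℤ = X ^ n - 1 := by
  have := prod_cyclotomic_eq_X_pow_sub_one hn.pos ℤ
  rw [hn.divisors] at this
  rwa [Finset.prod_insert (by simp [hn.one_lt.ne]), Finset.prod_singleton] at this

lemma cyclo_pq (p q : ℕ) (hp : p.Prime) (hq : q.Prime) (hpq : p ≠ q) :
    cyclotomic (p * q) ℤ * (((X : Polynomial ℤ) ^ p - 1) * (X ^ q - 1)) =
      ((X : Polynomial ℤ) ^ (p * q) - 1) * (X - 1) := by
  have hpos : 0 < p * q := Nat.mul_pos hp.pos hq.pos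
  have hprod := prod_cyclotomic_eq_X_pow_sub_one hpos ℤ
  rw [hdiv p q hp hq hpq] at hprod
  have h1p : (1 : ℕ) ≠ p := hp.one_lt.ne
  have h1q : (1 : ℕ) ≠ q := hq.one_lt.ne
  have h1pq : (1 : ℕ) ≠ p * q := by nlinarith [hp.one_lt, hq.one_lt]
  have hppq : p ≠ p * q := by nlinarith [hq.one_lt, hp.pos]
  have hqpq : q ≠ p * q := by nlinarith [hp.one_lt, hq.pos]
  rw [Finset.prod_insert (by simp [h1p, h1q, h1pq]),
      Finset.prod_insert (by simp [hpq, hppq]),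
      Finset.prod_insert (by simp [hqpq]), Finset.prod_singleton] at hprod
  have ep := cyclo_prime_mul p hp
  have eq' := cyclo_prime_mul q hq
  rw [cyclotomic_one] at hprod ep eq'
  rw [← ep, ← eq', ← hprod]
  ring

lemma key_arith (p q : ℕ) (hp : p.Prime) (hq : q.Prime) (hpq : p ≠ q) :
    p * (p : ZMod q)⁻¹.val + q * (q : ZMod p)⁻¹.val = p * q + 1 := by
  haveI : NeZero q := ⟨hq.ne_zero⟩
  haveI : NeZero p := ⟨hp.ne_zero⟩
  haveI := Fact.mk hp
  haveI := Fact.mk hq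
  have hp1 : 1 < p := hp.one_lt
  have hq1 : 1 < q := hq.one_lt
  set a := (p : ZMod q)⁻¹.val with ha
  set b := (q : ZMod p)⁻¹.val with hb
  have hcop : Nat.Coprime p q := (Nat.coprime_primes hp hq).2 hpq
  have h1 : ((p * a : ℕ) : ZMod q) = ((1 : ℕ) : ZMod q) := by
    push_cast [ha, ZMod.natCast_val, ZMod.cast_id]
    exact ZMod.coe_mul_inv_eq_one p hcop
  have h2 : ((q * b : ℕ) : ZMod p) = ((1 : ℕ) : ZMod p) := by
    push_cast [hb, ZMod.natCast_val, ZMod.cast_id]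
    exact ZMod.coe_mul_inv_eq_one q hcop.symm
  have m1 : Nat.ModEq q 1 (p * a) := ((ZMod.natCast_eq_natCast_iff _ _ _).mp h1).symm
  have m2 : Nat.ModEq p 1 (q * b) := ((ZMod.natCast_eq_natCast_iff _ _ _).mp h2).symm
  have haq : a < q := ZMod.val_lt _
  have hbp : b < p := ZMod.val_lt _
  have ha1 : a ≠ 0 := by
    rw [ha, Ne, ZMod.val_eq_zero]
    apply inv_ne_zero
    simpa [Ne, ZMod.natCast_eq_zero_iff] using
      (Nat.Prime.coprime_iff_not_dvd hq).mp hcop.symm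
  have hb1 : b ≠ 0 := by
    rw [hb, Ne, ZMod.val_eq_zero]
    apply inv_ne_zero
    simpa [Ne, ZMod.natCast_eq_zero_iff] using
      (Nat.Prime.coprime_iff_not_dvd hp).mp hcop
  have hpa1 : 1 ≤ p * a := Nat.one_le_iff_ne_zero.mpr (Nat.mul_ne_zero hp.ne_zero ha1)
  have hqb1 : 1 ≤ q * b := Nat.one_le_iff_ne_zero.mpr (Nat.mul_ne_zero hq.ne_zero hb1)
  obtain ⟨k1, hk1⟩ := (Nat.modEq_iff_dvd' hpa1).mp m1
  obtain ⟨k2, hk2⟩ := (Nat.modEq_iff_dvd' hqb1).mp m2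
  have d1 : q ∣ (p * a + q * b - 1) := ⟨k1 + b, by rw [Nat.mul_add, ← hk1]; omega⟩
  have d2 : p ∣ (p * a + q * b - 1) := ⟨k2 + a, by rw [Nat.mul_add, ← hk2]; omega⟩
  obtain ⟨k, hk⟩ := Nat.Coprime.mul_dvd_of_dvd_of_dvd hcop d2 d1
  have hk' : p * a + q * b = p * q * k + 1 := by omega
  have hub : p * a + p ≤ p * q := by
    have : p * (a + 1) ≤ p * q := Nat.mul_le_mul_left p haq
    linarith [this, (by ring : p * (a + 1) = p * a + p)]
  have hub2 : q * b + q ≤ p * q := by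
    have : q * (b + 1) ≤ q * p := Nat.mul_le_mul_left q hbp
    have h2' : q * p = p * q := Nat.mul_comm q p
    linarith [this, (by ring : q * (b + 1) = q * b + q)]
  have hklt : k < 2 := by
    by_contra hc
    push_neg at hc
    have h2k : p * q * 2 ≤ p * q * k := Nat.mul_le_mul_left _ hc
    have hpq0 : 0 < p * q := by positivity
    linarith
  have hk1' : 1 ≤ k := by
    rcases Nat.eq_zero_or_pos k with h0 | h
    · exfalso; rw [h0, Nat.mul_zero] at hk; omega
    · exact h
  interval_cases k
  · linarith [hk', (by ring : p * q * 1 = p * q)]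

/-- For distinct primes `p`, `q`, modulo `1 - x^{pq}` the cyclotomic polynomial
`Φ_{pq}(x)` is congruent to
`((1-x^{pq})/(1-x^q))·((1-x^{p·(p⁻¹ mod q)})/(1-x^p))
 + ((1-x^{pq})/(1-x^p))·((x^{pq}-x^{q·(q⁻¹ mod p)})/(1-x^q))`.
The four quotients are written out as the (geometric-series) polynomials they
equal: `(1-x^{pq})/(1-x^q) = ∑_{i<p} x^{qi}`,
`(1-x^{p·a})/(1-x^p) = ∑_{i<a} x^{pi}` with `a = (p⁻¹ mod q)`,
`(1-x^{pq})/(1-x^p) = ∑_{i<q} x^{pi}`, and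
`(x^{pq}-x^{q·b})/(1-x^q) = -∑_{b ≤ i < p} x^{qi}` with `b = (q⁻¹ mod p)`. -/
theorem stmt4 (p q : ℕ) (hp : p.Prime) (hq : q.Prime) (hpq : p ≠ q) :
    ((1 - X ^ (p * q)) : Polynomial ℤ) ∣
      cyclotomic (p * q) ℤ -
        ((∑ i ∈ Finset.range p, X ^ (q * i)) *
            (∑ i ∈ Finset.range ((p : ZMod q)⁻¹.val), X ^ (p * i)) +
          (∑ i ∈ Finset.range q, X ^ (p * i)) *
            (-(∑ i ∈ Finset.Ico ((q : ZMod p)⁻¹.val) p, X ^ (q * i)))) := by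
  haveI : NeZero q := ⟨hq.ne_zero⟩
  haveI : NeZero p := ⟨hp.ne_zero⟩
  set a := (p : ZMod q)⁻¹.val with ha
  set b := (q : ZMod p)⁻¹.val with hb
  have key : p * a + q * b = p * q + 1 := key_arith p q hp hq hpq
  have hble : b ≤ p := (ZMod.val_lt _).le
  set A := ∑ i ∈ Finset.range p, (X : Polynomial ℤ) ^ (q * i) with hAdef
  set Ga := ∑ i ∈ Finset.range a, (X : Polynomial ℤ) ^ (p * i) with hGadef
  set Cq := ∑ i ∈ Finset.range q, (X : Polynomial ℤ) ^ (p * i) with hCdef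
  set D := ∑ i ∈ Finset.Ico b p, (X : Polynomial ℤ) ^ (q * i) with hDdef
  set Gb := ∑ i ∈ Finset.range b, (X : Polynomial ℤ) ^ (q * i) with hGbdef
  have hA : A * (X ^ q - 1) = X ^ (p * q) - 1 := by rw [hAdef, mul_comm p q]; exact geo q p
  have hGa : Ga * (X ^ p - 1) = X ^ (p * a) - 1 := geo p a
  have hC : Cq * (X ^ p - 1) = X ^ (p * q) - 1 := geo p q
  have hGb : Gb * (X ^ q - 1) = X ^ (q * b) - 1 := geo q b
  have hD : D * (X ^ q - 1) = X ^ (p * q) - X ^ (q * b) := by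
    rw [hDdef, Finset.sum_Ico_eq_sub _ hble, sub_mul, geo q p, geo q b, mul_comm q p]
    ring
  have h7 : (X : Polynomial ℤ) ^ (p * a) * X ^ (q * b) = X ^ (p * q) * X := by
    rw [← pow_add, key, pow_add, pow_one]
  have h1 := cyclo_pq p q hp hq hpq
  have hPQ : (((X : Polynomial ℤ) ^ p - 1) * ((X : Polynomial ℤ) ^ q - 1)) ≠ 0 :=
    mul_ne_zero (Xp1_ne p hp.ne_zero) (Xp1_ne q hq.ne_zero)
  have hfac : cyclotomic (p * q) ℤ - (A * Ga + Cq * (-D)) =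
      (1 - X ^ (p * q)) * (cyclotomic (p * q) ℤ - Ga * Gb) := by
    apply mul_left_cancel₀ hPQ
    linear_combination (X : Polynomial ℤ) ^ (p * q) * h1 - Ga * (X ^ p - 1) * hA +
      (-(X ^ (p * q) - 1) + (1 - X ^ (p * q)) * Gb * (X ^ q - 1)) * hGa +
      D * (X ^ q - 1) * hC + (X ^ (p * q) - 1) * hD +
      (1 - X ^ (p * q)) * (X ^ (p * a) - 1) * hGb - (X ^ (p * q) - 1) * h7
  rw [hfac]
  exact Dvd.intro _ rfl
end

section
/- Let p, q be distinct primes. For 0 ≤ k < pq, the coefficient of x^k in Φ_{pq}(x) equals [[(k·p⁻¹ mod q) < (p⁻¹ mod q)]] − [[(k·q⁻¹ mod p) ≥ (q⁻¹ mod p)]], where [[·]] is the indicator (1 if the inequality holds, 0 otherwise). In particular every coefficient of Φ_{pq}(x) lies in {−1, 0, 1}. -/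
open Polynomial Finset

private lemma polyid5 (u v N : ℕ) (h : u + v + 1 = N) :
    ((X:ℤ[X])^(u+1) - 1) * ((X:ℤ[X])^(v+1) - 1)
      - X * (((X:ℤ[X])^v - 1) * ((X:ℤ[X])^u - 1))
    = ((X:ℤ[X])^N - 1) * (X - 1) := by
  subst h; ring


/-- For distinct primes `p`, `q` and `0 ≤ k < pq`, the coefficient of `x^k` in
`Φ_{pq}(x)` equals `[[(kp⁻¹ mod q) < (p⁻¹ mod q)]] − [[(kq⁻¹ mod p) ≥ (q⁻¹ mod p)]]`.
In particular every coefficient of `Φ_{pq}` lies in `{-1, 0, 1}`. -/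
theorem stmt5 (p q : ℕ) (hp : p.Prime) (hq : q.Prime) (hpq : p ≠ q) :
    (∀ k : ℕ, k < p * q →
      (cyclotomic (p * q) ℤ).coeff k =
        (if ((k : ZMod q) * (p : ZMod q)⁻¹).val < ((p : ZMod q)⁻¹).val
          then (1 : ℤ) else 0) -
        (if ((k : ZMod p) * (q : ZMod p)⁻¹).val ≥ ((q : ZMod p)⁻¹).val
          then (1 : ℤ) else 0)) ∧
    ∀ k : ℕ, |(cyclotomic (p * q) ℤ).coeff k| ≤ 1 := by
  haveI : Fact p.Prime := ⟨hp⟩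
  haveI : Fact q.Prime := ⟨hq⟩
  have hp2 : 2 ≤ p := hp.two_le
  have hq2 : 2 ≤ q := hq.two_le
  have hqp0 : ¬ p ∣ q := fun h => hpq ((Nat.prime_dvd_prime_iff_eq hp hq).mp h)
  have hpq0 : ¬ q ∣ p := fun h => hpq ((Nat.prime_dvd_prime_iff_eq hq hp).mp h).symm
  have hpz : (p : ZMod q) ≠ 0 := by
    rw [Ne, ZMod.natCast_eq_zero_iff]; exact hpq0
  have hqz : (q : ZMod p) ≠ 0 := by
    rw [Ne, ZMod.natCast_eq_zero_iff]; exact hqp0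
  set r := ((p : ZMod q)⁻¹).val with hr
  set s := ((q : ZMod p)⁻¹).val with hs
  have hrq : r < q := ZMod.val_lt _
  have hsp : s < p := ZMod.val_lt _
  have hr1 : 1 ≤ r := by
    rcases Nat.eq_zero_or_pos r with h | h
    · exact absurd ((ZMod.val_eq_zero _).mp h) (inv_ne_zero hpz)
    · exact h
  have hs1 : 1 ≤ s := by
    rcases Nat.eq_zero_or_pos s with h | h
    · exact absurd ((ZMod.val_eq_zero _).mp h) (inv_ne_zero hqz)
    · exact h
  -- key : r * p + s * q = p * q + 1
  have hrpq : ((r * p : ℕ) : ZMod q) = ((1 : ℕ) : ZMod q) := by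
    push_cast
    rw [hr, ZMod.natCast_zmod_val, inv_mul_cancel₀ hpz]
  have hsqp : ((s * q : ℕ) : ZMod p) = ((1 : ℕ) : ZMod p) := by
    push_cast
    rw [hs, ZMod.natCast_zmod_val, inv_mul_cancel₀ hqz]
  have e_q : r * p + s * q ≡ 1 [MOD q] := by
    have h1 : r * p ≡ 1 [MOD q] := (ZMod.natCast_eq_natCast_iff _ _ _).mp hrpq
    have h2 : s * q ≡ 0 [MOD q] := (Nat.modEq_zero_iff_dvd).mpr ⟨s, mul_comm s q⟩
    simpa using h1.add h2
  have e_p : r * p + s * q ≡ 1 [MOD p] := by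
    have h1 : s * q ≡ 1 [MOD p] := (ZMod.natCast_eq_natCast_iff _ _ _).mp hsqp
    have h2 : r * p ≡ 0 [MOD p] := (Nat.modEq_zero_iff_dvd).mpr ⟨r, mul_comm r p⟩
    simpa using h2.add h1
  have hco : Nat.Coprime p q := (Nat.coprime_primes hp hq).mpr hpq
  have e : r * p + s * q ≡ 1 [MOD p * q] :=
    (Nat.modEq_and_modEq_iff_modEq_mul hco).mp ⟨e_p, e_q⟩
  have hub : r * p + s * q < 2 * (p * q) := by
    have h1 : r * p < q * p := Nat.mul_lt_mul_of_lt_of_le hrq le_rfl (by omega)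
    have h2 : s * q < p * q := Nat.mul_lt_mul_of_lt_of_le hsp le_rfl (by omega)
    have : q * p = p * q := mul_comm q p
    omega
  have hlb : p + q ≤ r * p + s * q := by
    have h1 : 1 * p ≤ r * p := Nat.mul_le_mul_right _ hr1
    have h2 : 1 * q ≤ s * q := Nat.mul_le_mul_right _ hs1
    omega
  have hkey : r * p + s * q = p * q + 1 := by
    have hN : 4 ≤ p * q := by calc 4 = 2 * 2 := rfl
                                   _ ≤ p * q := Nat.mul_le_mul hp2 hq2
    have hmod : (r * p + s * q) % (p * q) = 1 := by
      have := e
      unfold Nat.ModEq at this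
      rwa [Nat.mod_eq_of_lt (show (1:ℕ) < p*q by omega)] at this
    have hdm := Nat.div_add_mod (r * p + s * q) (p * q)
    rw [hmod] at hdm
    generalize (r * p + s * q) / (p * q) = d at hdm
    rcases d with _ | n
    · simp at hdm; omega
    · have hx : p * q * (n + 1) = p * q * n + p * q := by ring
      have hn0 : n = 0 := by
        by_contra h
        have : p * q * 1 ≤ p * q * n := Nat.mul_le_mul_left _ (by omega)
        have : p * q * 1 = p * q := mul_one _
        omega
      subst hn0
      simp at hdm
      omega
  -- polynomial identities
  have hcp : cyclotomic q ℤ = ∑ i ∈ range q, (X:ℤ[X])^i := cyclotomic_prime ℤ q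
  have hqp : cyclotomic (p*q) ℤ * cyclotomic q ℤ = ∑ i ∈ range q, ((X:ℤ[X])^p)^i := by
    rw [mul_comm p q, ← cyclotomic_expand_eq_cyclotomic_mul hp hqp0 ℤ, hcp, map_sum]
    simp [Polynomial.expand_X]
  have hq1 : (X:ℤ[X])^q - 1 = cyclotomic q ℤ * ((X:ℤ[X]) - 1) := by
    rw [hcp]; exact (geom_sum_mul _ _).symm
  have hPhi : cyclotomic (p*q) ℤ * (((X:ℤ[X])^p - 1) * ((X:ℤ[X])^q - 1))
      = ((X:ℤ[X])^(p*q) - 1) * ((X:ℤ[X]) - 1) := by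
    calc cyclotomic (p*q) ℤ * (((X:ℤ[X])^p - 1) * ((X:ℤ[X])^q - 1))
        = (cyclotomic (p*q) ℤ * cyclotomic q ℤ) * ((X:ℤ[X])^p - 1) * ((X:ℤ[X]) - 1) := by
          rw [hq1]; ring
      _ = (∑ i ∈ range q, ((X:ℤ[X])^p)^i) * ((X:ℤ[X])^p - 1) * ((X:ℤ[X]) - 1) := by rw [hqp]
      _ = ((X:ℤ[X])^(p*q) - 1) * ((X:ℤ[X]) - 1) := by rw [geom_sum_mul, ← pow_mul]
  have hc1 : p * r = r * p := mul_comm _ _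
  have hc2 : q * s = s * q := mul_comm _ _
  have hpr1 : 1 ≤ p * r := Nat.mul_pos (by omega) hr1
  have hqs1 : 1 ≤ q * s := Nat.mul_pos (by omega) hs1
  have e1 : p * (q - r) = q * s - 1 := by
    have h1 : p * (q - r) + p * r = p * q := by rw [← Nat.mul_add]; congr 1; omega
    omega
  have e2 : q * (p - s) = p * r - 1 := by
    have h1 : q * (p - s) + q * s = q * p := by rw [← Nat.mul_add]; congr 1; omega
    have h2 : q * p = p * q := mul_comm _ _
    omega
  have e3 : p * r = q * (p - s) + 1 := by omega
  have e4 : q * s = p * (q - r) + 1 := by omega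
  have hFid : ((∑ i ∈ range r, ((X:ℤ[X])^p)^i) * (∑ j ∈ range s, ((X:ℤ[X])^q)^j)
      - X * ((∑ i ∈ range (q-r), ((X:ℤ[X])^p)^i) * (∑ j ∈ range (p-s), ((X:ℤ[X])^q)^j)))
      * (((X:ℤ[X])^p - 1) * ((X:ℤ[X])^q - 1))
      = ((X:ℤ[X])^(p*q) - 1) * ((X:ℤ[X]) - 1) := by
    calc ((∑ i ∈ range r, ((X:ℤ[X])^p)^i) * (∑ j ∈ range s, ((X:ℤ[X])^q)^j)
      - X * ((∑ i ∈ range (q-r), ((X:ℤ[X])^p)^i) * (∑ j ∈ range (p-s), ((X:ℤ[X])^q)^j)))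
      * (((X:ℤ[X])^p - 1) * ((X:ℤ[X])^q - 1))
        = ((∑ i ∈ range r, ((X:ℤ[X])^p)^i) * ((X:ℤ[X])^p - 1))
            * ((∑ j ∈ range s, ((X:ℤ[X])^q)^j) * ((X:ℤ[X])^q - 1))
          - X * (((∑ i ∈ range (q-r), ((X:ℤ[X])^p)^i) * ((X:ℤ[X])^p - 1))
            * ((∑ j ∈ range (p-s), ((X:ℤ[X])^q)^j) * ((X:ℤ[X])^q - 1))) := by ring
      _ = (((X:ℤ[X])^p)^r - 1) * (((X:ℤ[X])^q)^s - 1)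
          - X * ((((X:ℤ[X])^p)^(q-r) - 1) * (((X:ℤ[X])^q)^(p-s) - 1)) := by
          rw [geom_sum_mul, geom_sum_mul, geom_sum_mul, geom_sum_mul]
      _ = ((X:ℤ[X])^(q*(p-s)+1) - 1) * ((X:ℤ[X])^(p*(q-r)+1) - 1)
          - X * (((X:ℤ[X])^(p*(q-r)) - 1) * ((X:ℤ[X])^(q*(p-s)) - 1)) := by
          rw [← pow_mul, ← pow_mul, ← pow_mul, ← pow_mul, ← e3, ← e4]
      _ = ((X:ℤ[X])^(p*q) - 1) * ((X:ℤ[X]) - 1) := polyid5 _ _ _ (by omega)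
  have hX1 : (((X:ℤ[X])^p - 1) * ((X:ℤ[X])^q - 1)) ≠ 0 := by
    have h1 := X_pow_sub_C_ne_zero (R := ℤ) (by omega : 0 < p) 1
    have h2 := X_pow_sub_C_ne_zero (R := ℤ) (by omega : 0 < q) 1
    rw [map_one] at h1 h2
    exact mul_ne_zero h1 h2
  have hcyc : cyclotomic (p*q) ℤ
      = (∑ i ∈ range r, ((X:ℤ[X])^p)^i) * (∑ j ∈ range s, ((X:ℤ[X])^q)^j)
        - X * ((∑ i ∈ range (q-r), ((X:ℤ[X])^p)^i) * (∑ j ∈ range (p-s), ((X:ℤ[X])^q)^j)) :=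
    mul_right_cancel₀ hX1 (hPhi.trans hFid.symm)
  have hSsum : (∑ i ∈ range r, ((X:ℤ[X])^p)^i) * (∑ j ∈ range s, ((X:ℤ[X])^q)^j)
      = ∑ i ∈ range r, ∑ j ∈ range s, (X:ℤ[X])^(p*i+q*j) := by
    rw [Finset.sum_mul_sum]
    refine sum_congr rfl fun i _ => sum_congr rfl fun j _ => ?_
    rw [← pow_mul, ← pow_mul, ← pow_add]
  have hTsum : (X:ℤ[X]) * ((∑ i ∈ range (q-r), ((X:ℤ[X])^p)^i)
        * (∑ j ∈ range (p-s), ((X:ℤ[X])^q)^j))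
      = ∑ i ∈ range (q-r), ∑ j ∈ range (p-s), (X:ℤ[X])^(p*i+q*j+1) := by
    rw [Finset.sum_mul_sum, Finset.mul_sum]
    refine sum_congr rfl fun i _ => ?_
    rw [Finset.mul_sum]
    refine sum_congr rfl fun j _ => ?_
    rw [← pow_mul, ← pow_mul, ← pow_add, ← pow_succ']
  have main : ∀ k : ℕ, k < p * q →
      (cyclotomic (p * q) ℤ).coeff k =
        (if ((k : ZMod q) * (p : ZMod q)⁻¹).val < r then (1 : ℤ) else 0) -
        (if ((k : ZMod p) * (q : ZMod p)⁻¹).val ≥ s then (1 : ℤ) else 0) := by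
    intro k hk
    set i0 := ((k : ZMod q) * (p : ZMod q)⁻¹).val with hi0def
    set j0 := ((k : ZMod p) * (q : ZMod p)⁻¹).val with hj0def
    have hi0q : i0 < q := ZMod.val_lt _
    have hj0p : j0 < p := ZMod.val_lt _
    have huniq : ∀ i j m : ℕ, i < q → j < p → p * i + q * j = m →
        ((m : ZMod q) = (k : ZMod q)) → ((m : ZMod p) = (k : ZMod p)) → i = i0 ∧ j = j0 := by
      intro i j m hi hj hm hmq hmp
      constructor
      · have h1 : ((p * i + q * j : ℕ) : ZMod q) = (k : ZMod q) := by rw [hm]; exact hmq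
        have h1' : (p : ZMod q) * (i : ZMod q) = (k : ZMod q) := by
          push_cast at h1
          rwa [ZMod.natCast_self, zero_mul, add_zero] at h1
        have h2 : (k : ZMod q) * (p : ZMod q)⁻¹ = (i : ZMod q) := by
          rw [← h1', mul_comm (p : ZMod q), mul_assoc, mul_inv_cancel₀ hpz, mul_one]
        have : i0 = i := by rw [hi0def, h2, ZMod.val_cast_of_lt hi]
        omega
      · have h1 : ((p * i + q * j : ℕ) : ZMod p) = (k : ZMod p) := by rw [hm]; exact hmp
        have h1' : (q : ZMod p) * (j : ZMod p) = (k : ZMod p) := by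
          push_cast at h1
          rwa [ZMod.natCast_self, zero_mul, zero_add] at h1
        have h2 : (k : ZMod p) * (q : ZMod p)⁻¹ = (j : ZMod p) := by
          rw [← h1', mul_comm (q : ZMod p), mul_assoc, mul_inv_cancel₀ hqz, mul_one]
        have : j0 = j := by rw [hj0def, h2, ZMod.val_cast_of_lt hj]
        omega
    have hcongq : ((p * i0 + q * j0 : ℕ) : ZMod q) = ((k : ℕ) : ZMod q) := by
      push_cast
      rw [ZMod.natCast_self, zero_mul, add_zero, hi0def, ZMod.natCast_zmod_val,
        mul_comm (p : ZMod q), mul_assoc, inv_mul_cancel₀ hpz, mul_one]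
    have hcongp : ((p * i0 + q * j0 : ℕ) : ZMod p) = ((k : ℕ) : ZMod p) := by
      push_cast
      rw [ZMod.natCast_self, zero_mul, zero_add, hj0def, ZMod.natCast_zmod_val,
        mul_comm (q : ZMod p), mul_assoc, inv_mul_cancel₀ hqz, mul_one]
    have hcong : p * i0 + q * j0 ≡ k [MOD p * q] :=
      (Nat.modEq_and_modEq_iff_modEq_mul hco).mp
        ⟨(ZMod.natCast_eq_natCast_iff _ _ _).mp hcongp, (ZMod.natCast_eq_natCast_iff _ _ _).mp hcongq⟩
    have hex1 : i0 < r → j0 < s → p * i0 + q * j0 = k := by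
      intro h1 h2
      refine Nat.ModEq.eq_of_lt_of_lt hcong ?_ hk
      have b1 : p * (i0+1) ≤ p * r := Nat.mul_le_mul_left _ (by omega)
      have b2 : q * (j0+1) ≤ q * s := Nat.mul_le_mul_left _ (by omega)
      have b1' : p * (i0+1) = p * i0 + p := by ring
      have b2' : q * (j0+1) = q * j0 + q := by ring
      omega
    have hex2 : r ≤ i0 → s ≤ j0 → p * i0 + q * j0 = k + p * q := by
      intro h1 h2
      have hcong2 : p * i0 + q * j0 ≡ k + p * q [MOD p * q] := by
        refine hcong.trans ?_
        have h3 : k + p * q ≡ k + 0 [MOD p * q] :=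
          (Nat.ModEq.refl k).add ((Nat.modEq_zero_iff_dvd).mpr dvd_rfl)
        simpa using h3.symm
      have b1 : p * r ≤ p * i0 := Nat.mul_le_mul_left _ h1
      have b2 : q * s ≤ q * j0 := Nat.mul_le_mul_left _ h2
      have lb : p * q < p * i0 + q * j0 := by omega
      have ub : p * i0 + q * j0 < 2 * (p * q) := by
        have c1 : p * i0 < p * q := Nat.mul_lt_mul_of_le_of_lt le_rfl hi0q (by omega)
        have c2 : q * j0 < q * p := Nat.mul_lt_mul_of_le_of_lt le_rfl hj0p (by omega)
        have c3 : q * p = p * q := mul_comm _ _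
        omega
      have h3 : (p * i0 + q * j0) % (p * q) = (k + p * q) % (p * q) := hcong2
      rw [Nat.add_mod_right, Nat.mod_eq_sub_mod (le_of_lt lb), Nat.mod_eq_of_lt (by omega),
        Nat.mod_eq_of_lt hk] at h3
      omega
    have hfwd : ∀ i j : ℕ, i < q - r → j < p - s → k = p * i + q * j + 1 →
        i + r = i0 ∧ j + s = j0 := by
      intro i j hi hj h
      have ha : p * (i + r) = p * i + p * r := by ring
      have hb : q * (j + s) = q * j + q * s := by ring
      refine huniq (i+r) (j+s) (k + p*q) (by omega) (by omega) (by omega) ?_ ?_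
      · push_cast
        rw [ZMod.natCast_self, mul_zero, add_zero]
      · push_cast
        rw [ZMod.natCast_self, zero_mul, add_zero]
    rw [hcyc, coeff_sub, hSsum, hTsum, finset_sum_coeff, finset_sum_coeff]
    simp only [finset_sum_coeff, coeff_X_pow]
    have hS' : (∑ i ∈ range r, ∑ j ∈ range s, if k = p*i+q*j then (1:ℤ) else 0)
        = if i0 < r ∧ j0 < s then 1 else 0 := by
      by_cases hcase : i0 < r ∧ j0 < s
      · rw [if_pos hcase]
        have hkk := hex1 hcase.1 hcase.2
        have hcg : ∀ i ∈ range r, ∀ j ∈ range s,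
            (if k = p*i+q*j then (1:ℤ) else 0) = if i = i0 ∧ j = j0 then 1 else 0 := by
          intro i hi j hj
          rw [mem_range] at hi hj
          refine if_congr ⟨fun h => ?_, fun h => ?_⟩ rfl rfl
          · exact huniq i j k (by omega) (by omega) h.symm rfl rfl
          · rw [h.1, h.2]; omega
        calc (∑ i ∈ range r, ∑ j ∈ range s, if k = p*i+q*j then (1:ℤ) else 0)
            = ∑ i ∈ range r, ∑ j ∈ range s, (if i = i0 ∧ j = j0 then (1:ℤ) else 0) :=
              sum_congr rfl fun i hi => sum_congr rfl fun j hj => hcg i hi j hj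
          _ = 1 := by
              rw [Finset.sum_eq_single i0
                (fun b _ hb => Finset.sum_eq_zero fun j _ => by simp [hb])
                (fun h => absurd (Finset.mem_range.mpr hcase.1) h)]
              rw [Finset.sum_eq_single j0
                (fun b _ hb => by simp [hb])
                (fun h => absurd (Finset.mem_range.mpr hcase.2) h)]
              simp
      · rw [if_neg hcase]
        refine Finset.sum_eq_zero fun i hi => Finset.sum_eq_zero fun j hj => ?_
        rw [mem_range] at hi hj
        rw [if_neg]
        intro h
        obtain ⟨h1, h2⟩ := huniq i j k (by omega) (by omega) h.symm rfl rfl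
        exact hcase ⟨by omega, by omega⟩
    have hT' : (∑ i ∈ range (q-r), ∑ j ∈ range (p-s), if k = p*i+q*j+1 then (1:ℤ) else 0)
        = if r ≤ i0 ∧ s ≤ j0 then 1 else 0 := by
      by_cases hcase : r ≤ i0 ∧ s ≤ j0
      · rw [if_pos hcase]
        have hkk := hex2 hcase.1 hcase.2
        have hcg : ∀ i ∈ range (q-r), ∀ j ∈ range (p-s),
            (if k = p*i+q*j+1 then (1:ℤ) else 0) = if i = i0 - r ∧ j = j0 - s then 1 else 0 := by
          intro i hi j hj
          rw [mem_range] at hi hj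
          refine if_congr ⟨fun h => ?_, fun h => ?_⟩ rfl rfl
          · obtain ⟨h1, h2⟩ := hfwd i j hi hj h
            omega
          · obtain ⟨rfl, rfl⟩ := h
            have ha : p * (i0 - r) + p * r = p * i0 := by rw [← Nat.mul_add]; congr 1; omega
            have hb : q * (j0 - s) + q * s = q * j0 := by rw [← Nat.mul_add]; congr 1; omega
            omega
        calc (∑ i ∈ range (q-r), ∑ j ∈ range (p-s), if k = p*i+q*j+1 then (1:ℤ) else 0)
            = ∑ i ∈ range (q-r), ∑ j ∈ range (p-s), (if i = i0 - r ∧ j = j0 - s then (1:ℤ) else 0) :=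
              sum_congr rfl fun i hi => sum_congr rfl fun j hj => hcg i hi j hj
          _ = 1 := by
              rw [Finset.sum_eq_single (i0 - r)
                (fun b _ hb => Finset.sum_eq_zero fun j _ => by simp [hb])
                (fun h => absurd (Finset.mem_range.mpr (by omega)) h)]
              rw [Finset.sum_eq_single (j0 - s)
                (fun b _ hb => by simp [hb])
                (fun h => absurd (Finset.mem_range.mpr (by omega)) h)]
              simp
      · rw [if_neg hcase]
        refine Finset.sum_eq_zero fun i hi => Finset.sum_eq_zero fun j hj => ?_
        rw [mem_range] at hi hj
        rw [if_neg]
        intro h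
        obtain ⟨h1, h2⟩ := hfwd i j hi hj h
        exact hcase ⟨by omega, by omega⟩
    rw [hS', hT']
    split_ifs <;> omega
  constructor
  · exact main
  · intro k
    by_cases hk : k < p * q
    · rw [main k hk]
      split_ifs <;> norm_num
    · have hdeg : (cyclotomic (p*q) ℤ).natDegree < k := by
        rw [natDegree_cyclotomic]
        have := Nat.totient_lt (p*q) (by omega)
        omega
      rw [coeff_eq_zero_of_natDegree_lt hdeg]
      norm_num
end

section
/- Let p, q be distinct primes. The number of coefficients of Φ_{pq}(x) equal to 1 is (p⁻¹ mod q)·(q⁻¹ mod p), and the number equal to −1 is (p⁻¹ mod q)·(q⁻¹ mod p) − 1. -/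
open Polynomial Finset

/-!
Put `r = (p⁻¹ mod q)` and `s = (q⁻¹ mod p)`, so that `p r + q s = p q + 1`. Since
`Φ_{pq} (X^p - 1)(X^q - 1) = (X^{pq} - 1)(X - 1)`, expanding geometric sums gives the
Lam–Leung formula
`Φ_{pq} = (∑_{i<r} X^{pi})(∑_{j<s} X^{qj}) - X (∑_{i<q-r} X^{pi})(∑_{j<p-s} X^{qj})`.
Because `p` is invertible modulo `q`, the exponents `p i + q j` with `i < q` are pairwise
distinct, and the exponents of the two products never meet. So `Φ_{pq}` has `r s`
coefficients equal to `1` and `(q - r)(p - s) = r s - 1` equal to `-1`.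
-/

lemma mul_inv_val_add_mul_inv_val {p q : ℕ} (hpq : p.Coprime q) (hp : 1 < p) (hq : 1 < q) :
    p * ((p : ZMod q)⁻¹).val + q * ((q : ZMod p)⁻¹).val = p * q + 1 := by
  have : NeZero p := ⟨by omega⟩
  have : NeZero q := ⟨by omega⟩
  set r := ((p : ZMod q)⁻¹).val
  set s := ((q : ZMod p)⁻¹).val
  have hr : p * r ≡ 1 [MOD q] := by
    rw [← ZMod.natCast_eq_natCast_iff]
    push_cast
    rw [ZMod.natCast_zmod_val, ZMod.coe_mul_inv_eq_one _ hpq]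
  have hs : q * s ≡ 1 [MOD p] := by
    rw [← ZMod.natCast_eq_natCast_iff]
    push_cast
    rw [ZMod.natCast_zmod_val, ZMod.coe_mul_inv_eq_one _ hpq.symm]
  have hmod : 1 ≡ p * r + q * s [MOD p * q] := by
    refine (Nat.modEq_and_modEq_iff_modEq_mul hpq).mp ⟨?_, ?_⟩
    · simpa using hs.symm.add_left (p * r)
    · simpa using hr.symm.add_right (q * s)
  have hr0 : r ≠ 0 := by
    rintro h
    simp [h, Nat.ModEq, Nat.mod_eq_of_lt hq] at hr
  have hpr : p ≤ p * r := Nat.le_mul_of_pos_right p (Nat.pos_of_ne_zero hr0)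
  have hprq : p * r < p * q := Nat.mul_lt_mul_of_pos_left (ZMod.val_lt _) (by omega)
  have hqsp : q * s < p * q := mul_comm q p ▸ Nat.mul_lt_mul_of_pos_left (ZMod.val_lt _) (by omega)
  have := Nat.eq_of_dvd_of_lt_two_mul (by omega) ((Nat.modEq_iff_dvd' (by omega)).mp hmod)
    (by omega)
  omega

lemma eq_and_eq_of_mul_add_mul_eq {a b i j i' j' : ℕ} (hab : a.Coprime b) (hi : i < b)
    (hi' : i' < b) (h : a * i + b * j = a * i' + b * j') : i = i' ∧ j = j' := by
  have hmod : a * i % b = a * i' % b := by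
    simpa only [Nat.add_mul_mod_self_left] using congrArg (· % b) h
  obtain rfl : i = i' := (Nat.ModEq.cancel_left_of_coprime hab.symm hmod).eq_of_lt_of_lt hi hi'
  exact ⟨rfl, Nat.eq_of_mul_eq_mul_left (by omega) (Nat.add_left_cancel h)⟩

def mulAddMulImage (a b r s : ℕ) : Finset ℕ :=
  (range r ×ˢ range s).image fun ij => a * ij.1 + b * ij.2

section MulAddMulImage

variable {a b r s : ℕ}

lemma injOn_mulAddMul (hab : a.Coprime b) (hr : r ≤ b) :
    Set.InjOn (fun ij : ℕ × ℕ => a * ij.1 + b * ij.2) (range r ×ˢ range s : Finset (ℕ × ℕ)) := by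
  rintro ⟨i, j⟩ hij ⟨i', j'⟩ hij' h
  simp only [coe_product, Set.mem_prod, mem_coe, mem_range] at hij hij'
  obtain ⟨rfl, rfl⟩ := eq_and_eq_of_mul_add_mul_eq hab (by omega) (by omega) h
  rfl

lemma card_mulAddMulImage (hab : a.Coprime b) (hr : r ≤ b) :
    #(mulAddMulImage a b r s) = r * s := by
  rw [mulAddMulImage, card_image_of_injOn (injOn_mulAddMul hab hr), card_product, card_range,
    card_range]

lemma sum_X_pow_mulAddMulImage {R : Type*} [CommSemiring R] (hab : a.Coprime b) (hr : r ≤ b) :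
    ∑ k ∈ mulAddMulImage a b r s, (X : R[X]) ^ k =
      (∑ i ∈ range r, X ^ (a * i)) * ∑ j ∈ range s, X ^ (b * j) := by
  rw [mulAddMulImage, sum_image (injOn_mulAddMul hab hr), sum_mul_sum, sum_product]
  simp only [pow_add]

lemma mulAddMulImage_subset_range (ha : 0 < a) (hb : 0 < b) (hrs : a * r + b * s = a * b + 1) :
    mulAddMulImage a b r s ⊆ range (a * b) := by
  simp only [subset_iff, mulAddMulImage, mem_image, mem_product, mem_range]
  rintro _ ⟨⟨i, j⟩, ⟨hi, hj⟩, rfl⟩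
  nlinarith

lemma map_mulAddMulImage_subset_range (hrs : a * r + b * s = a * b + 1) :
    (mulAddMulImage a b (b - r) (a - s)).map (addLeftEmbedding 1) ⊆ range (a * b) := by
  simp only [subset_iff, mulAddMulImage, mem_map, mem_image, mem_product, mem_range]
  rintro _ ⟨_, ⟨⟨i, j⟩, ⟨hi, hj⟩, rfl⟩, rfl⟩
  have hi' : i + 1 + r ≤ b := by omega
  have hj' : j + 1 + s ≤ a := by omega
  simp only [addLeftEmbedding_apply]
  nlinarith

lemma disjoint_mulAddMulImage (hab : a.Coprime b) (hrs : a * r + b * s = a * b + 1)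
    (hr : r ≤ b) :
    Disjoint (mulAddMulImage a b r s)
      ((mulAddMulImage a b (b - r) (a - s)).map (addLeftEmbedding 1)) := by
  simp only [disjoint_left, mulAddMulImage, mem_map, mem_image, mem_product, mem_range]
  rintro _ ⟨⟨i, j⟩, ⟨hi, -⟩, rfl⟩ ⟨_, ⟨⟨i', j'⟩, ⟨hi', -⟩, rfl⟩, h⟩
  -- adding `a r + b s = a b + 1` to both sides makes the `i`-components comparable modulo `b`
  have hshift : a * i + b * (j + a) = a * (r + i') + b * (s + j') := by
    simp only [addLeftEmbedding_apply] at h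
    nlinarith
  have := (eq_and_eq_of_mul_add_mul_eq hab (by omega) (by omega) hshift).1
  omega

lemma sub_mul_sub_add_one_eq_mul (hrs : a * r + b * s = a * b + 1) (hr : r ≤ b) (hs : s ≤ a) :
    (b - r) * (a - s) + 1 = r * s := by
  zify [hr, hs] at hrs ⊢
  linear_combination -hrs

end MulAddMulImage

section Coeff

variable {A B : Finset ℕ}

lemma coeff_sum_X_pow_sub_sum_X_pow {R : Type*} [Ring R] (k : ℕ) :
    (∑ a ∈ A, (X : R[X]) ^ a - ∑ b ∈ B, X ^ b).coeff k =
      (if k ∈ A then 1 else 0) - (if k ∈ B then 1 else 0) := by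
  simp only [coeff_sub, finsetSum_coeff, coeff_X_pow, sum_ite_eq]

lemma filter_coeff_eq_one_of_disjoint (hAB : Disjoint A B) {N : ℕ} (hA : A ⊆ range N) :
    (range N).filter (fun k => (∑ a ∈ A, (X : ℤ[X]) ^ a - ∑ b ∈ B, X ^ b).coeff k = 1) = A := by
  ext k
  rw [mem_filter, coeff_sum_X_pow_sub_sum_X_pow]
  by_cases hkA : k ∈ A
  · simp [hkA, hA hkA, disjoint_left.mp hAB hkA]
  · by_cases hkB : k ∈ B <;> simp [hkA, hkB]

lemma filter_coeff_eq_neg_one_of_disjoint (hAB : Disjoint A B) {N : ℕ} (hB : B ⊆ range N) :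
    (range N).filter (fun k => (∑ a ∈ A, (X : ℤ[X]) ^ a - ∑ b ∈ B, X ^ b).coeff k = -1) = B := by
  ext k
  rw [mem_filter, coeff_sum_X_pow_sub_sum_X_pow]
  by_cases hkB : k ∈ B
  · simp [hkB, hB hkB, disjoint_right.mp hAB hkB]
  · by_cases hkA : k ∈ A <;> simp [hkA, hkB]

end Coeff

section LamLeung

variable {R : Type*} [CommRing R]

lemma geom_sum_X_pow_mul (n m : ℕ) :
    (∑ i ∈ range m, (X : R[X]) ^ (n * i)) * (X ^ n - 1) = X ^ (n * m) - 1 := by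
  simpa only [pow_mul] using geom_sum_mul ((X : R[X]) ^ n) m

variable (R) in
noncomputable def lamLeungPoly (a b r s : ℕ) : R[X] :=
  (∑ i ∈ range r, X ^ (a * i)) * (∑ j ∈ range s, X ^ (b * j)) -
    X * ((∑ i ∈ range (b - r), X ^ (a * i)) * ∑ j ∈ range (a - s), X ^ (b * j))

lemma lamLeungPoly_mul {a b r s : ℕ} (hrs : a * r + b * s = a * b + 1) (hr : r ≤ b)
    (hs : s ≤ a) :
    lamLeungPoly R a b r s * ((X ^ a - 1) * (X ^ b - 1)) = (X ^ (a * b) - 1) * (X - 1) := by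
  zify at hrs
  have e1 : a * (b - r) + 1 = b * s := by zify [hr]; linear_combination -hrs
  have e2 : b * (a - s) + 1 = a * r := by zify [hs]; linear_combination -hrs
  have e3 : a * (b - r) + b * (a - s) + 1 = a * b := by zify [hr, hs]; linear_combination -hrs
  calc _ = (∑ i ∈ range r, (X : R[X]) ^ (a * i)) * (X ^ a - 1) *
          ((∑ j ∈ range s, X ^ (b * j)) * (X ^ b - 1)) -
        X * ((∑ i ∈ range (b - r), X ^ (a * i)) * (X ^ a - 1) *
          ((∑ j ∈ range (a - s), X ^ (b * j)) * (X ^ b - 1))) := by rw [lamLeungPoly]; ring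
    _ = (X ^ (a * b) - 1) * (X - 1) := by
      simp only [geom_sum_X_pow_mul, ← e1, ← e2, ← e3, pow_add, pow_one]
      ring

lemma lamLeungPoly_eq_sum_X_pow_sub_sum_X_pow {a b r s : ℕ} (hab : a.Coprime b) (hr : r ≤ b) :
    lamLeungPoly R a b r s = ∑ k ∈ mulAddMulImage a b r s, X ^ k -
      ∑ k ∈ (mulAddMulImage a b (b - r) (a - s)).map (addLeftEmbedding 1), X ^ k := by
  simp only [lamLeungPoly, sum_map, addLeftEmbedding_apply, pow_add, pow_one, ← mul_sum,
    sum_X_pow_mulAddMulImage hab hr, sum_X_pow_mulAddMulImage hab (Nat.sub_le b r)]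

lemma cyclotomic_mul_prime_mul_X_pow_sub_one {p q : ℕ} (hp : p.Prime) (hq : q.Prime)
    (hpq : p ≠ q) :
    cyclotomic (p * q) R * ((X ^ p - 1) * (X ^ q - 1)) = (X ^ (p * q) - 1) * (X - 1) := by
  have : Fact q.Prime := ⟨hq⟩
  have hexpand := cyclotomic_expand_eq_cyclotomic_mul hp
    (fun h => hpq ((Nat.prime_dvd_prime_iff_eq hp hq).mp h)) R
  calc cyclotomic (p * q) R * ((X ^ p - 1) * (X ^ q - 1))
      = expand R p (cyclotomic q R * (X - 1)) * (X - 1) := by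
        rw [map_mul, hexpand, ← cyclotomic_prime_mul_X_sub_one R q, mul_comm q p]
        simp only [map_sub, expand_X, map_one]
        ring
    _ = (X ^ (p * q) - 1) * (X - 1) := by
        rw [cyclotomic_prime_mul_X_sub_one]
        simp only [map_sub, map_pow, expand_X, map_one, pow_mul]

theorem cyclotomic_prime_mul_prime_eq_lamLeungPoly {p q r s : ℕ} (hp : p.Prime) (hq : q.Prime)
    (hpq : p ≠ q) (hrs : p * r + q * s = p * q + 1) (hr : r ≤ q) (hs : s ≤ p) :
    cyclotomic (p * q) R = lamLeungPoly R p q r s := by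
  have hmonic : (((X : R[X]) ^ p - 1) * (X ^ q - 1)).Monic :=
    (monic_X_pow_sub_C 1 hp.ne_zero).mul (monic_X_pow_sub_C 1 hq.ne_zero)
  refine hmonic.isRegular.right ?_
  simp only [cyclotomic_mul_prime_mul_X_pow_sub_one hp hq hpq, lamLeungPoly_mul hrs hr hs]

end LamLeung

/-- For distinct primes `p`, `q`, the number of coefficients of `Φ_{pq}(x)`
equal to `1` is `(p⁻¹ mod q)·(q⁻¹ mod p)`, and the number equal to `-1` is
`(p⁻¹ mod q)·(q⁻¹ mod p) − 1`. -/
theorem stmt6 (p q : ℕ) (hp : p.Prime) (hq : q.Prime) (hpq : p ≠ q) :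
    ((Finset.range (p * q)).filter
        (fun k => (cyclotomic (p * q) ℤ).coeff k = 1)).card =
      ((p : ZMod q)⁻¹).val * ((q : ZMod p)⁻¹).val ∧
    ((Finset.range (p * q)).filter
        (fun k => (cyclotomic (p * q) ℤ).coeff k = -1)).card =
      ((p : ZMod q)⁻¹).val * ((q : ZMod p)⁻¹).val - 1 := by
  have hco : p.Coprime q := (Nat.coprime_primes hp hq).mpr hpq
  have : NeZero p := ⟨hp.ne_zero⟩
  have : NeZero q := ⟨hq.ne_zero⟩
  set r := ((p : ZMod q)⁻¹).val
  set s := ((q : ZMod p)⁻¹).val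
  have hrs : p * r + q * s = p * q + 1 := mul_inv_val_add_mul_inv_val hco hp.one_lt hq.one_lt
  have hr : r ≤ q := (ZMod.val_lt _).le
  have hs : s ≤ p := (ZMod.val_lt _).le
  have hdisj := disjoint_mulAddMulImage hco hrs hr
  rw [cyclotomic_prime_mul_prime_eq_lamLeungPoly hp hq hpq hrs hr hs,
    lamLeungPoly_eq_sum_X_pow_sub_sum_X_pow hco hr,
    filter_coeff_eq_one_of_disjoint hdisj (mulAddMulImage_subset_range hp.pos hq.pos hrs),
    filter_coeff_eq_neg_one_of_disjoint hdisj (map_mulAddMulImage_subset_range hrs), card_map,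
    card_mulAddMulImage hco hr, card_mulAddMulImage hco (Nat.sub_le q r)]
  have := sub_mul_sub_add_one_eq_mul hrs hr hs
  omega
end

section
/- Every coefficient of Φ_{pq}(x) for distinct primes p, q has absolute value at most 1 (the height of Φ_{pq} is 1). -/
/-!
Since `Φ_{pq} (1 - X^p) (1 - X^q) = (1 - X^{pq}) (1 - X)`, as power series
`Φ_{pq} ≡ (1 - X) ∑_{i,j} X^{pi + qj}` modulo `X^{pq}`. Below `pq` an exponent `pi + qj` determines
`(i, j)` because `p` and `q` are coprime, so the coefficients of the double sum there are `0` or `1`,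
and each coefficient of `Φ_{pq}` is the difference of two of them. From `pq` on the coefficients
vanish, as `deg Φ_{pq} = φ(pq) < pq`.
-/

open Polynomial Finset

theorem cyclotomic_prime_mul_prime_mul_one_sub_X_pow {p q : ℕ} (hp : p.Prime) (hq : q.Prime)
    (hpq : p ≠ q) (R : Type*) [CommRing R] :
    cyclotomic (p * q) R * ((1 - X ^ p) * (1 - X ^ q)) = (1 - X ^ (p * q)) * (1 - X) := by
  have : Fact q.Prime := ⟨hq⟩
  have hq_sub_one := cyclotomic_prime_mul_X_sub_one R q
  have hexpand := congrArg (expand R p) hq_sub_one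
  rw [map_mul, cyclotomic_expand_eq_cyclotomic_mul hp
    (fun h => hpq ((Nat.prime_dvd_prime_iff_eq hp hq).1 h))] at hexpand
  simp only [map_sub, map_pow, map_one, expand_X, ← pow_mul] at hexpand
  rw [mul_comm p q] at hexpand ⊢
  linear_combination (X - 1 : R[X]) * hexpand - cyclotomic (q * p) R * (X ^ p - 1) * hq_sub_one

theorem card_filter_antidiagonal_dvd_le_one {p q m : ℕ} (hpq : p.Coprime q) (hm : m < p * q) :
    #{x ∈ antidiagonal m | p ∣ x.1 ∧ q ∣ x.2} ≤ 1 := by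
  refine card_le_one.2 fun a ha b hb => ?_
  simp only [mem_filter, HasAntidiagonal.mem_antidiagonal] at ha hb
  obtain ⟨ha, hpa, hqa⟩ := ha
  obtain ⟨hb, hpb, hqb⟩ := hb
  have hdiff : (b.1 - a.1 : ℤ) = a.2 - b.2 := by omega
  have hdvd : (p * q : ℤ) ∣ b.1 - a.1 :=
    (Nat.isCoprime_iff_coprime.2 hpq).mul_dvd
      ((Int.natCast_dvd_natCast.2 hpb).sub (Int.natCast_dvd_natCast.2 hpa))
      (hdiff ▸ (Int.natCast_dvd_natCast.2 hqa).sub (Int.natCast_dvd_natCast.2 hqb))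
  have := Int.eq_zero_of_abs_lt_dvd hdvd (by rw [abs_lt]; constructor <;> omega)
  ext <;> omega

namespace PowerSeries

noncomputable def geomSeries (R : Type*) [Semiring R] (p : ℕ) : PowerSeries R :=
  mk fun n => if p ∣ n then 1 else 0

variable {R : Type*}

theorem coeff_geomSeries_mul_geomSeries [Semiring R] (p q m : ℕ) :
    coeff m (geomSeries R p * geomSeries R q) = #{x ∈ antidiagonal m | p ∣ x.1 ∧ q ∣ x.2} := by
  rw [coeff_mul, natCast_card_filter]
  refine sum_congr rfl fun x _ => ?_
  simp only [geomSeries, coeff_mk, ite_and, ite_mul, one_mul, zero_mul]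

theorem one_sub_X_pow_mul_geomSeries [Ring R] {p : ℕ} (hp : 0 < p) :
    (1 - X ^ p) * geomSeries R p = 1 := by
  ext n
  rw [sub_mul, one_mul, map_sub, coeff_X_pow_mul', coeff_one]
  simp only [geomSeries, coeff_mk]
  rcases Nat.eq_zero_or_pos n with rfl | hn
  · simp [hp.ne']
  by_cases hpn : p ≤ n
  · simp [hpn, Nat.dvd_sub_iff_left hpn dvd_rfl, hn.ne']
  · have : ¬ p ∣ n := fun h => hpn (Nat.le_of_dvd hn h)
    simp [hpn, this, hn.ne']

theorem coe_cyclotomic_prime_mul_prime [CommRing R] {p q : ℕ} (hp : p.Prime) (hq : q.Prime)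
    (hpq : p ≠ q) :
    (cyclotomic (p * q) R : PowerSeries R) =
      (1 - X ^ (p * q)) * ((1 - X) * (geomSeries R p * geomSeries R q)) := by
  have h := congrArg ((↑) : R[X] → PowerSeries R)
    (cyclotomic_prime_mul_prime_mul_one_sub_X_pow hp hq hpq R)
  simp only [Polynomial.coe_mul, Polynomial.coe_sub, Polynomial.coe_pow, Polynomial.coe_X,
    Polynomial.coe_one] at h
  set Φ : PowerSeries R := ↑(cyclotomic (p * q) R)
  calc Φ = Φ * ((1 - X ^ p) * geomSeries R p) * ((1 - X ^ q) * geomSeries R q) := by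
        rw [one_sub_X_pow_mul_geomSeries hp.pos, one_sub_X_pow_mul_geomSeries hq.pos, mul_one,
          mul_one]
    _ = Φ * ((1 - X ^ p) * (1 - X ^ q)) * (geomSeries R p * geomSeries R q) := by ring
    _ = _ := by rw [h, mul_assoc]

theorem abs_coeff_one_sub_X_mul_le_one {f : PowerSeries ℤ} {k : ℕ}
    (hf : ∀ m ≤ k, 0 ≤ coeff m f ∧ coeff m f ≤ 1) : |coeff k ((1 - X) * f)| ≤ 1 := by
  rw [sub_mul, one_mul, map_sub, abs_le]
  cases k with
  | zero =>
    obtain ⟨h0, h1⟩ := hf 0 le_rfl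
    simp only [coeff_zero_X_mul]
    constructor <;> linarith
  | succ k =>
    obtain ⟨h0, h1⟩ := hf (k + 1) le_rfl
    obtain ⟨h0', h1'⟩ := hf k (Nat.le_succ k)
    rw [coeff_succ_X_mul]
    constructor <;> linarith

end PowerSeries

/-- Every coefficient of `Φ_{pq}(x)`, for distinct primes `p`, `q`, has
absolute value at most `1` (the height of `Φ_{pq}` is `1`). -/
theorem stmt7 (p q : ℕ) (hp : p.Prime) (hq : q.Prime) (hpq : p ≠ q) :
    ∀ k : ℕ, |(cyclotomic (p * q) ℤ).coeff k| ≤ 1 := by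
  intro k
  rcases lt_or_ge k (p * q) with hk | hk
  · rw [← Polynomial.coeff_coe, PowerSeries.coe_cyclotomic_prime_mul_prime hp hq hpq, sub_mul,
      one_mul, map_sub, PowerSeries.coeff_X_pow_mul', if_neg hk.not_ge, sub_zero]
    refine PowerSeries.abs_coeff_one_sub_X_mul_le_one fun m hm => ?_
    rw [PowerSeries.coeff_geomSeries_mul_geomSeries]
    exact ⟨Nat.cast_nonneg _, Nat.cast_le_one.2 <|
      card_filter_antidiagonal_dvd_le_one ((Nat.coprime_primes hp hq).2 hpq) (hm.trans_lt hk)⟩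
  · have hdeg : (cyclotomic (p * q) ℤ).natDegree < k := by
      rw [natDegree_cyclotomic]
      exact (Nat.totient_lt _ (one_lt_mul_of_lt_of_le hp.one_lt hq.one_lt.le)).trans_le hk
    simp [coeff_eq_zero_of_natDegree_lt hdeg]
end

section
/- Let N = p₁⋯pₙ be a product of n distinct primes. If ∑_{i=1}^n 1/p_i < 2n/(n-1), then deg P_N < N. -/
open Polynomial Finset

lemma aux_one_sub_X_pow_ne (k : ℕ) (hk : 0 < k) : (1 - X ^ k : ℤ[X]) ≠ 0 := by
  have h : (1 - X ^ k : ℤ[X]) = -(X ^ k - C 1) := by rw [C_1]; ring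
  rw [h, neg_ne_zero]
  exact X_pow_sub_C_ne_zero hk 1

lemma aux_one_sub_X_pow_deg (k : ℕ) : (1 - X ^ k : ℤ[X]).natDegree = k := by
  have h : (1 - X ^ k : ℤ[X]) = -(X ^ k - C 1) := by rw [C_1]; ring
  rw [h, natDegree_neg, natDegree_X_pow_sub_C]

lemma aux_sq_sum (n : ℕ) (x : Fin n → ℝ) :
    (∑ i, x i) ^ 2 = ∑ i, (x i) ^ 2 + 2 * ∑ i, ∑ j ∈ Ioi i, x i * x j := by
  have h1 : (∑ i, x i) ^ 2 = ∑ i : Fin n, ∑ j : Fin n, x i * x j := by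
    rw [sq, Finset.sum_mul_sum]
  have h2 : ∀ i : Fin n, (∑ j : Fin n, x i * x j)
      = (∑ j ∈ Ioi i, x i * x j + ∑ j ∈ Iio i, x i * x j) + x i * x i := by
    intro i
    classical
    rw [Fintype.sum_eq_add_sum_compl i,
      show ({i}ᶜ : Finset (Fin n)) = (Ioi i).disjUnion (Iio i) (Finset.disjoint_Ioi_Iio i)
        from by
          ext j
          simp only [Finset.mem_compl, Finset.mem_singleton, Finset.mem_disjUnion,
            mem_Ioi, mem_Iio]
          exact ⟨fun h => (Ne.symm h).lt_or_gt, fun h => h.elim (fun h => h.ne') fun h => h.ne⟩,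
      Finset.sum_disjUnion]
    ring
  have h3 : ∑ i : Fin n, ∑ j ∈ Iio i, x i * x j = ∑ i : Fin n, ∑ j ∈ Ioi i, x i * x j := by
    rw [Finset.sum_comm' (s' := fun j => Ioi j) (t' := univ) (by
      intro a b; simp [mem_Ioi, mem_Iio])]
    exact Finset.sum_congr rfl fun i _ => Finset.sum_congr rfl fun j _ => mul_comm _ _
  simp_rw [h1, h2]
  rw [Finset.sum_add_distrib, Finset.sum_add_distrib, h3]
  simp [sq]
  ring

/-- Let `N = p₁⋯pₙ` be a product of `n` distinct primes. If
`∑ 1/p_i < 2n/(n-1)`, then `deg P_N < N`, where `P_N` is the polynomial with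
`P_N(x)·∏_i(1-x^{N/p_i}) = (1-x^N)·∏_{i<j}(1-x^{N/(p_ip_j)})`. -/
theorem stmt9 (n : ℕ) (hn : 2 ≤ n) (p : Fin n → ℕ)
    (hp : ∀ i, (p i).Prime) (hinj : Function.Injective p)
    (N : ℕ) (hN : N = ∏ i, p i)
    (hsum : (∑ i, (1 : ℝ) / p i) < 2 * n / (n - 1))
    (P : Polynomial ℤ)
    (hP : P * ∏ i, (1 - X ^ (N / p i)) =
      (1 - X ^ N) * ∏ i, ∏ j ∈ Finset.Ioi i, (1 - X ^ (N / (p i * p j)))) :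
    P.natDegree < N := by
  classical
  have hp2 : ∀ i, 0 < p i := fun i => (hp i).pos
  have hNpos : 0 < N := by rw [hN]; exact Finset.prod_pos fun i _ => hp2 i
  have hdvd : ∀ i, p i ∣ N := fun i => hN ▸ Finset.dvd_prod_of_mem p (mem_univ i)
  have hdvd2 : ∀ i j : Fin n, i ≠ j → p i * p j ∣ N := fun i j hij =>
    Nat.Coprime.mul_dvd_of_dvd_of_dvd
      ((Nat.coprime_primes (hp i) (hp j)).2 fun h => hij (hinj h)) (hdvd i) (hdvd j)
  have hpos1 : ∀ i, 0 < N / p i := fun i =>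
    Nat.div_pos (Nat.le_of_dvd hNpos (hdvd i)) (hp2 i)
  have hpos2 : ∀ i j : Fin n, i ≠ j → 0 < N / (p i * p j) := fun i j h =>
    Nat.div_pos (Nat.le_of_dvd hNpos (hdvd2 i j h)) (Nat.mul_pos (hp2 i) (hp2 j))
  have hf1 : ∀ i : Fin n, (1 - X ^ (N / p i) : ℤ[X]) ≠ 0 := fun i =>
    aux_one_sub_X_pow_ne _ (hpos1 i)
  have hprod1 : (∏ i, (1 - X ^ (N / p i) : ℤ[X])) ≠ 0 :=
    Finset.prod_ne_zero_iff.2 fun i _ => hf1 i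
  have hf2 : ∀ i j : Fin n, j ∈ Ioi i → (1 - X ^ (N / (p i * p j)) : ℤ[X]) ≠ 0 :=
    fun i j hj => aux_one_sub_X_pow_ne _ (hpos2 i j (mem_Ioi.1 hj).ne)
  have hprod2 : (∏ i, ∏ j ∈ Ioi i, (1 - X ^ (N / (p i * p j)) : ℤ[X])) ≠ 0 :=
    Finset.prod_ne_zero_iff.2 fun i _ => Finset.prod_ne_zero_iff.2 fun j hj => hf2 i j hj
  have hXN : (1 - X ^ N : ℤ[X]) ≠ 0 := aux_one_sub_X_pow_ne _ hNpos
  have hPne : P ≠ 0 := by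
    intro h
    rw [h, zero_mul] at hP
    exact mul_ne_zero hXN hprod2 hP.symm
  have hinner : ∀ i : Fin n,
      (∏ j ∈ Ioi i, (1 - X ^ (N / (p i * p j)) : ℤ[X])).natDegree
        = ∑ j ∈ Ioi i, N / (p i * p j) := by
    intro i
    rw [Polynomial.natDegree_prod _ _ fun j hj => hf2 i j hj]
    exact Finset.sum_congr rfl fun j _ => aux_one_sub_X_pow_deg _
  have hdeg : P.natDegree + ∑ i, N / p i
      = N + ∑ i, ∑ j ∈ Ioi i, N / (p i * p j) := by
    have h := congrArg natDegree hP
    rw [natDegree_mul hPne hprod1, natDegree_mul hXN hprod2,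
      Polynomial.natDegree_prod _ _ (fun i _ => hf1 i),
      Polynomial.natDegree_prod _ _
        (fun i _ => Finset.prod_ne_zero_iff.2 fun j hj => hf2 i j hj)] at h
    simp_rw [aux_one_sub_X_pow_deg, hinner] at h
    simpa [aux_one_sub_X_pow_deg] using h
  have hkey : (∑ i, ∑ j ∈ Ioi i, N / (p i * p j)) < ∑ i, N / p i := by
    set x : Fin n → ℝ := fun i => 1 / p i with hx
    have xpos : ∀ i, 0 < x i := fun i => by
      simp only [hx, one_div, inv_pos]
      exact_mod_cast hp2 i
    have spos : 0 < ∑ i, x i := by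
      have : Nonempty (Fin n) := ⟨⟨0, by omega⟩⟩
      exact Finset.sum_pos (fun i _ => xpos i) univ_nonempty
    have hcast1 : ∀ i : Fin n, ((N / p i : ℕ) : ℝ) = (N : ℝ) * x i := by
      intro i
      rw [Nat.cast_div (hdvd i) (by exact_mod_cast (hp2 i).ne')]
      simp [hx]; ring
    have hcast2 : ∀ i j : Fin n, i ≠ j →
        ((N / (p i * p j) : ℕ) : ℝ) = (N : ℝ) * (x i * x j) := by
      intro i j h
      rw [Nat.cast_div (hdvd2 i j h) (by
        have := Nat.mul_pos (hp2 i) (hp2 j); exact_mod_cast this.ne')]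
      push_cast
      simp [hx]; ring
    rw [← Nat.cast_lt (α := ℝ), Nat.cast_sum, Nat.cast_sum]
    have hE : ∑ i : Fin n, ((∑ j ∈ Ioi i, N / (p i * p j) : ℕ) : ℝ)
        = (N : ℝ) * ∑ i, ∑ j ∈ Ioi i, x i * x j := by
      rw [Finset.mul_sum]
      refine Finset.sum_congr rfl fun i _ => ?_
      rw [Nat.cast_sum, Finset.mul_sum]
      exact Finset.sum_congr rfl fun j hj => hcast2 i j (mem_Ioi.1 hj).ne
    have hD : ∑ i : Fin n, ((N / p i : ℕ) : ℝ) = (N : ℝ) * ∑ i, x i := by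
      rw [Finset.mul_sum]
      exact Finset.sum_congr rfl fun i _ => hcast1 i
    rw [hE, hD]
    have hQs : (∑ i, ∑ j ∈ Ioi i, x i * x j) < ∑ i, x i := by
      have ident := aux_sq_sum n x
      have cauchy : (∑ i, x i) ^ 2 ≤ (n : ℝ) * ∑ i, (x i) ^ 2 := by
        have := sq_sum_le_card_mul_sum_sq (s := (univ : Finset (Fin n))) (f := x)
        simpa using this
      have hn1 : (0 : ℝ) < (n : ℝ) - 1 := by
        have : (2 : ℝ) ≤ n := by exact_mod_cast hn
        linarith
      have hsum' : (∑ i, x i) * ((n : ℝ) - 1) < 2 * n := by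
        rw [← lt_div_iff₀ hn1]
        exact hsum
      nlinarith [mul_lt_mul_of_pos_right hsum' spos, cauchy, ident, spos,
        mul_pos spos spos]
    exact mul_lt_mul_of_pos_left hQs (by exact_mod_cast hNpos)
  omega
end

section
/- Let N = p₁⋯pₙ be a product of n distinct primes with every p_i ≥ (n-1)/2. Then deg P_N < N. -/
open Polynomial Finset

/-- Let `N = p₁⋯pₙ` be a product of `n` distinct primes with every
`p_i ≥ (n-1)/2`. Then `deg P_N < N`. -/
theorem stmt10 (n : ℕ) (hn : 2 ≤ n) (p : Fin n → ℕ)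
    (hp : ∀ i, (p i).Prime) (hinj : Function.Injective p)
    (hbig : ∀ i, ((n : ℝ) - 1) / 2 ≤ p i)
    (N : ℕ) (hN : N = ∏ i, p i)
    (P : Polynomial ℤ)
    (hP : P * ∏ i, (1 - X ^ (N / p i)) =
      (1 - X ^ N) * ∏ i, ∏ j ∈ Finset.Ioi i, (1 - X ^ (N / (p i * p j)))) :
    P.natDegree < N := by
  have hn1 : 1 ≤ n := le_trans one_le_two hn
  have hpd : ∀ i, p i ∣ N := by
    intro i; rw [hN]; exact Finset.dvd_prod_of_mem _ (mem_univ i)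
  have hppd : ∀ i j, i ≠ j → p i * p j ∣ N := by
    intro i j hij
    have hco : Nat.Coprime (p i) (p j) :=
      (Nat.coprime_primes (hp i) (hp j)).2 (fun h => hij (hinj h))
    exact hco.mul_dvd_of_dvd_of_dvd (hpd i) (hpd j)
  have hppos : ∀ i, 0 < p i := fun i => (hp i).pos
  have hNpos : 0 < N := by
    rw [hN]; exact Finset.prod_pos (fun i _ => hppos i)
  have hkpos : ∀ i, 0 < N / p i :=
    fun i => Nat.div_pos (Nat.le_of_dvd hNpos (hpd i)) (hppos i)
  have hepos : ∀ i j, i ≠ j → 0 < N / (p i * p j) := fun i j hij =>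
    Nat.div_pos (Nat.le_of_dvd hNpos (hppd i j hij)) (Nat.mul_pos (hppos i) (hppos j))
  -- the bound `n - 1 ≤ 2 * p i` in ℕ
  have hbigN : ∀ i, n - 1 ≤ 2 * p i := by
    intro i
    have := hbig i
    have h2 : ((n : ℝ) - 1) ≤ 2 * p i := by linarith
    have h3 : ((n - 1 : ℕ) : ℝ) ≤ ((2 * p i : ℕ) : ℝ) := by
      push_cast [Nat.cast_sub hn1]
      push_cast at h2 ⊢
      linarith
    exact_mod_cast h3
  -- exact division identities
  have hdivmul : ∀ i j, i ≠ j → (N / (p i * p j)) * p j = N / p i := by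
    intro i j hij
    have h1 : N / (p i * p j) = N / p i / p j := by
      rw [Nat.div_div_eq_div_mul]
    have h2 : p j ∣ N / p i := by
      rw [Nat.dvd_div_iff_mul_dvd (hpd i)]
      exact hppd i j hij
    rw [h1, Nat.div_mul_cancel h2]
  -- key per-pair inequality
  have hkey : ∀ i j, i ≠ j → (n - 1) * (N / (p i * p j)) < N / p i + N / p j := by
    intro i j hij
    have h1 : n - 1 < p i + p j := by
      have := hbigN i
      have := hbigN j
      have hne : p i ≠ p j := fun h => hij (hinj h)
      omega
    calc (n - 1) * (N / (p i * p j)) < (p i + p j) * (N / (p i * p j)) :=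
          Nat.mul_lt_mul_of_lt_of_le h1 le_rfl (hepos i j hij)
      _ = (N / (p j * p i)) * p i + (N / (p i * p j)) * p j := by
          rw [mul_comm (p j) (p i)]; ring
      _ = N / p j + N / p i := by
          rw [hdivmul i j hij, hdivmul j i (Ne.symm hij)]
      _ = N / p i + N / p j := by ring
  -- the combinatorial inequality
  have hcomb : ∑ i, ∑ j ∈ Finset.Ioi i, N / (p i * p j) < ∑ i, N / p i := by
    have hmul : (n - 1) * (∑ i, ∑ j ∈ Finset.Ioi i, N / (p i * p j)) <
        (n - 1) * (∑ i, N / p i) := by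
      have hstep1 : (n - 1) * (∑ i, ∑ j ∈ Finset.Ioi i, N / (p i * p j)) <
          ∑ i, ∑ j ∈ Finset.Ioi i, (N / p i + N / p j) := by
        rw [Finset.mul_sum]
        simp_rw [Finset.mul_sum]
        rw [Finset.sum_sigma' univ (fun i => Finset.Ioi i)
          (fun i j => (n - 1) * (N / (p i * p j))),
          Finset.sum_sigma' univ (fun i => Finset.Ioi i)
          (fun i j => N / p i + N / p j)]
        apply Finset.sum_lt_sum_of_nonempty
        · refine ⟨⟨⟨0, by omega⟩, ⟨1, by omega⟩⟩, ?_⟩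
          simp [Finset.mem_sigma, Finset.mem_Ioi, Fin.mk_lt_mk]
        · rintro ⟨i, j⟩ hij
          simp only [Finset.mem_sigma, Finset.mem_Ioi] at hij
          exact hkey i j (ne_of_lt hij.2)
      have hstep2 : ∑ i, ∑ j ∈ Finset.Ioi i, (N / p i + N / p j) =
          (n - 1) * (∑ i, N / p i) := by
        simp_rw [Finset.sum_add_distrib]
        have hswap : (∑ i, ∑ j ∈ Finset.Ioi i, N / p j) =
            ∑ j, ∑ i ∈ Finset.Iio j, N / p j := by
          apply Finset.sum_comm'
          intro i j
          simp [Finset.mem_Ioi, Finset.mem_Iio]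
        rw [hswap]
        simp_rw [Finset.sum_const, smul_eq_mul, Fin.card_Ioi, Fin.card_Iio,
          Finset.mul_sum]
        rw [← Finset.sum_add_distrib]
        apply Finset.sum_congr rfl
        intro i _
        have hi : (i : ℕ) < n := i.isLt
        have : (n - 1 - (i : ℕ)) + (i : ℕ) = n - 1 := by omega
        rw [← add_mul, this]
      omega
    have : 0 < n - 1 := by omega
    exact Nat.lt_of_mul_lt_mul_left hmul
  -- polynomial degree facts
  have hone : ∀ m : ℕ, (1 : ℤ[X]) - X ^ m = -(X ^ m - C 1) := by
    intro m; rw [map_one]; ring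
  have hdeg1 : ∀ m : ℕ, ((1 : ℤ[X]) - X ^ m).natDegree = m := by
    intro m; rw [hone, natDegree_neg, natDegree_X_pow_sub_C]
  have hne : ∀ m : ℕ, 0 < m → (1 : ℤ[X]) - X ^ m ≠ 0 := by
    intro m hm; rw [hone]
    exact neg_ne_zero.mpr (X_pow_sub_C_ne_zero hm 1)
  -- nonzeroness of the various products
  have hprodL : (∏ i, ((1 : ℤ[X]) - X ^ (N / p i))) ≠ 0 :=
    Finset.prod_ne_zero_iff.mpr (fun i _ => hne _ (hkpos i))
  have hprodR : ((1 : ℤ[X]) - X ^ N) *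
      ∏ i, ∏ j ∈ Finset.Ioi i, (1 - X ^ (N / (p i * p j))) ≠ 0 := by
    apply mul_ne_zero (hne _ hNpos)
    apply Finset.prod_ne_zero_iff.mpr
    intro i _
    apply Finset.prod_ne_zero_iff.mpr
    intro j hj
    exact hne _ (hepos i j (ne_of_lt (Finset.mem_Ioi.mp hj)))
  have hPne : P ≠ 0 := by
    intro h
    rw [h, zero_mul] at hP
    exact hprodR hP.symm
  -- compute degrees of both sides
  have hdegL : (P * ∏ i, ((1 : ℤ[X]) - X ^ (N / p i))).natDegree =
      P.natDegree + ∑ i, N / p i := by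
    rw [natDegree_mul hPne hprodL, natDegree_prod _ _ (fun i _ => hne _ (hkpos i))]
    simp_rw [hdeg1]
  have hdegR : (((1 : ℤ[X]) - X ^ N) *
      ∏ i, ∏ j ∈ Finset.Ioi i, (1 - X ^ (N / (p i * p j)))).natDegree =
      N + ∑ i, ∑ j ∈ Finset.Ioi i, N / (p i * p j) := by
    rw [natDegree_mul (hne _ hNpos), natDegree_prod, hdeg1]
    · congr 1
      apply Finset.sum_congr rfl
      intro i _
      rw [natDegree_prod _ _
        (fun j hj => hne _ (hepos i j (ne_of_lt (Finset.mem_Ioi.mp hj))))]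
      simp_rw [hdeg1]
    · intro i _
      apply Finset.prod_ne_zero_iff.mpr
      intro j hj
      exact hne _ (hepos i j (ne_of_lt (Finset.mem_Ioi.mp hj)))
    · apply Finset.prod_ne_zero_iff.mpr
      intro i _
      apply Finset.prod_ne_zero_iff.mpr
      intro j hj
      exact hne _ (hepos i j (ne_of_lt (Finset.mem_Ioi.mp hj)))
  have heq : P.natDegree + ∑ i, N / p i =
      N + ∑ i, ∑ j ∈ Finset.Ioi i, N / (p i * p j) := by
    rw [← hdegL, ← hdegR, hP]
  omega
end

section
/- Let N = p₁⋯pₙ be a product of distinct primes and p a prime not dividing N. Then (1 - x^N)·P_{pN}(x) = P_N(x^p)·∏_{i=1}^n (1 - x^{N/p_i}) in ℤ[x]. -/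
open Polynomial Finset

lemma aux13 (k : ℕ) (hk : 0 < k) : (1 - X ^ k : Polynomial ℤ) ≠ 0 := by
  intro h
  have := congrArg (eval 0) h
  simp [zero_pow hk.ne'] at this

/-- Let `N = p₁⋯pₙ` be a product of distinct primes and `p` a prime not
dividing `N`. Then `(1 - x^N)·P_{pN}(x) = P_N(x^p)·∏_i(1 - x^{N/p_i})` in
`ℤ[x]`. The polynomials `P_N` and `P_{pN}` are specified by their defining
equations (denominator times `P` equals numerator); for `pN` the prime factors
are `p, p₁, …, pₙ`, so its denominator is `(1-x^N)·∏_i(1-x^{pN/p_i})` and its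
numerator is `(1-x^{pN})·∏_i(1-x^{N/p_i})·∏_{i<j}(1-x^{pN/(p_ip_j)})`. -/
theorem stmt13 (n : ℕ) (p : Fin n → ℕ)
    (hp : ∀ i, (p i).Prime) (hinj : Function.Injective p)
    (q : ℕ) (hq : q.Prime) (N : ℕ) (hN : N = ∏ i, p i) (hqN : ¬ q ∣ N)
    (PN PqN : Polynomial ℤ)
    (hPN : PN * ∏ i, (1 - X ^ (N / p i)) =
      (1 - X ^ N) * ∏ i, ∏ j ∈ Finset.Ioi i, (1 - X ^ (N / (p i * p j))))
    (hPqN : PqN * ((1 - X ^ N) * ∏ i, (1 - X ^ (q * N / p i))) =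
      (1 - X ^ (q * N)) * (∏ i, (1 - X ^ (N / p i))) *
        ∏ i, ∏ j ∈ Finset.Ioi i, (1 - X ^ (q * N / (p i * p j)))) :
    (1 - X ^ N) * PqN = PN.comp (X ^ q) * ∏ i, (1 - X ^ (N / p i)) := by
  have hNpos : 0 < N := by
    rw [hN]; exact Finset.prod_pos fun i _ => (hp i).pos
  have hdvd : ∀ i, p i ∣ N := fun i => by
    rw [hN]; exact Finset.dvd_prod_of_mem _ (mem_univ i)
  have hdvd2 : ∀ i j, i ≠ j → p i * p j ∣ N := fun i j hij => by
    have hco : Nat.Coprime (p i) (p j) :=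
      (Nat.coprime_primes (hp i) (hp j)).mpr (fun h => hij (hinj h))
    exact hco.mul_dvd_of_dvd_of_dvd (hdvd i) (hdvd j)
  have e1 : ∀ i : Fin n, N / p i * q = q * N / p i := fun i => by
    rw [Nat.mul_div_assoc q (hdvd i), mul_comm]
  -- comp version of hPN
  have hPN' : PN.comp (X ^ q) * ∏ i, (1 - X ^ (q * N / p i)) =
      (1 - X ^ (q * N)) * ∏ i, ∏ j ∈ Finset.Ioi i, (1 - X ^ (q * N / (p i * p j))) := by
    have h := congrArg (fun r : Polynomial ℤ => r.comp (X ^ q)) hPN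
    simp only [mul_comp, Polynomial.prod_comp, sub_comp, one_comp, pow_comp, X_comp,
      ← pow_mul] at h
    have e1' : ∀ i : Fin n, q * (N / p i) = q * N / p i := fun i =>
      (Nat.mul_div_assoc q (hdvd i)).symm
    have e2 : ∀ i : Fin n, ∀ j ∈ Finset.Ioi i,
        (1 - (X : Polynomial ℤ) ^ (q * (N / (p i * p j))))
        = 1 - X ^ (q * N / (p i * p j)) := fun i j hj => by
      rw [Nat.mul_div_assoc q (hdvd2 i j (Fin.ne_of_lt (mem_Ioi.mp hj)))]
    simp only [e1'] at h
    rw [Finset.prod_congr rfl (fun i _ => Finset.prod_congr rfl (e2 i))] at h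
    exact h
  have hD : ((1 - X ^ N) * ∏ i, (1 - (X : Polynomial ℤ) ^ (q * N / p i))) ≠ 0 := by
    refine mul_ne_zero (aux13 N hNpos) (Finset.prod_ne_zero_iff.mpr fun i _ => aux13 _ ?_)
    exact Nat.div_pos (Nat.le_of_dvd (Nat.mul_pos hq.pos hNpos) ((hdvd i).mul_left q)) (hp i).pos
  apply mul_right_cancel₀ hD
  generalize q * N = M at hPqN hPN' ⊢
  linear_combination (1 - X ^ N) * hPqN -
    (1 - X ^ N) * (∏ i, (1 - (X : Polynomial ℤ) ^ (N / p i))) * hPN'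
end

section
/- Let p_i and p_j be distinct primes dividing N = p₁⋯pₙ, and set N_i = N/p_i, N_j = N/p_j, N_{ij} = N/(p_ip_j). Then (p_j⁻¹ mod p_i)·N_i + (p_i⁻¹ mod p_j)·N_j = N + N_{ij}. -/
open Finset

lemma inv_val_facts (P Q : ℕ) (hP : P.Prime) (hQ : Q.Prime) (hne : P ≠ Q) :
    ((Q : ZMod P)⁻¹).val * Q ≡ 1 [MOD P] ∧
      1 ≤ ((Q : ZMod P)⁻¹).val ∧ ((Q : ZMod P)⁻¹).val < P := by
  haveI : Fact P.Prime := ⟨hP⟩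
  have hQ0 : (Q : ZMod P) ≠ 0 := by
    intro h
    exact hne ((Nat.prime_dvd_prime_iff_eq hP hQ).mp
      ((ZMod.natCast_eq_zero_iff Q P).mp h))
  have hinv0 : (Q : ZMod P)⁻¹ ≠ 0 := inv_ne_zero hQ0
  constructor
  · have : (((((Q : ZMod P)⁻¹).val * Q : ℕ)) : ZMod P) = ((1 : ℕ) : ZMod P) := by
      push_cast
      rw [ZMod.natCast_val, ZMod.cast_id]
      exact inv_mul_cancel₀ hQ0
    exact (ZMod.natCast_eq_natCast_iff _ _ _).mp this
  · constructor
    · have := (ZMod.val_eq_zero _).not.mpr hinv0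
      omega
    · exact ZMod.val_lt _

/-- Let `p_i ≠ p_j` be distinct primes dividing `N = p₁⋯pₙ`, with `N_i = N/p_i`,
`N_j = N/p_j`, `N_{ij} = N/(p_ip_j)`. Then
`(p_j⁻¹ mod p_i)·N_i + (p_i⁻¹ mod p_j)·N_j = N + N_{ij}`. -/
theorem stmt15 (n : ℕ) (p : Fin n → ℕ)
    (hp : ∀ k, (p k).Prime) (hinj : Function.Injective p)
    (N : ℕ) (hN : N = ∏ k, p k) (i j : Fin n) (hij : i ≠ j) :
    ((p j : ZMod (p i))⁻¹).val * (N / p i) +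
      ((p i : ZMod (p j))⁻¹).val * (N / p j) = N + N / (p i * p j) := by
  have hpi := hp i
  have hpj := hp j
  have hne : p i ≠ p j := fun h => hij (hinj h)
  set a := ((p j : ZMod (p i))⁻¹).val with ha
  set b := ((p i : ZMod (p j))⁻¹).val with hb
  obtain ⟨hA1, hA2, hA3⟩ := inv_val_facts (p i) (p j) hpi hpj hne
  obtain ⟨hB1, hB2, hB3⟩ := inv_val_facts (p j) (p i) hpj hpi hne.symm
  -- key arithmetic identity
  have hcop : Nat.Coprime (p i) (p j) :=
    (Nat.coprime_primes hpi hpj).mpr hne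
  have hmod : a * p j + b * p i ≡ 1 [MOD p i * p j] := by
    have h1 : a * p j + b * p i ≡ 1 [MOD p i] := by
      calc a * p j + b * p i ≡ a * p j + b * 0 [MOD p i] :=
            Nat.ModEq.add_right_cancel' 0 (by simpa using (Nat.ModEq.mul_left b (Nat.modEq_zero_iff_dvd.mpr dvd_rfl)).add_left (a * p j))
        _ = a * p j := by ring
        _ ≡ 1 [MOD p i] := hA1
    have h2 : a * p j + b * p i ≡ 1 [MOD p j] := by
      have : b * p i ≡ 1 [MOD p j] := hB1
      calc a * p j + b * p i ≡ a * 0 + b * p i [MOD p j] :=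
            Nat.ModEq.add_right _ (Nat.ModEq.mul_left a (Nat.modEq_zero_iff_dvd.mpr dvd_rfl))
        _ = b * p i := by ring
        _ ≡ 1 [MOD p j] := hB1
    exact (Nat.modEq_and_modEq_iff_modEq_mul hcop).mp ⟨h1, h2⟩
  have hkey : a * p j + b * p i = p i * p j + 1 := by
    set S := a * p j + b * p i with hS
    set m := p i * p j with hm
    have hm1 : 1 < m := by
      have := hpi.two_le; have := hpj.two_le
      calc 1 < 2 * 2 := by norm_num
        _ ≤ p i * p j := Nat.mul_le_mul ‹2 ≤ p i› ‹2 ≤ p j›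
    have hSmod : S % m = 1 := by
      have h : S % m = 1 % m := hmod
      rwa [Nat.mod_eq_of_lt hm1] at h
    have hSlt : S < 2 * m := by
      have h1 : a * p j ≤ (p i - 1) * p j := Nat.mul_le_mul_right _ (by omega)
      have h2 : b * p i ≤ (p j - 1) * p i := Nat.mul_le_mul_right _ (by omega)
      have := hpi.two_le; have := hpj.two_le
      have e1 : (p i - 1) * p j = p i * p j - p j := by
        rw [Nat.sub_mul, one_mul]
      have e2 : (p j - 1) * p i = p j * p i - p i := by
        rw [Nat.sub_mul, one_mul]
      have hle : p j ≤ p i * p j := Nat.le_mul_of_pos_left _ (by omega)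
      have hle2 : p i ≤ p j * p i := Nat.le_mul_of_pos_left _ (by omega)
      have : p j * p i = m := by rw [hm, Nat.mul_comm]
      omega
    have hS1 : 1 < S := by
      have : p j ≤ a * p j := Nat.le_mul_of_pos_left _ hA2
      have := hpj.two_le
      omega
    have hSge : m ≤ S := by
      by_contra h
      push_neg at h
      rw [Nat.mod_eq_of_lt h] at hSmod
      omega
    have hq : S / m = 1 := Nat.div_eq_of_lt_le (by omega) (by omega)
    have := Nat.div_add_mod S m
    rw [hq, hSmod] at this
    omega
  -- decompose N
  set M := ∏ k ∈ (univ.erase i).erase j, p k with hM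
  have hNdecomp : N = p i * (p j * M) := by
    rw [hN, ← Finset.mul_prod_erase univ p (mem_univ i),
      ← Finset.mul_prod_erase _ p (Finset.mem_erase.mpr ⟨Ne.symm hij, mem_univ j⟩)]
  have hpi0 : 0 < p i := hpi.pos
  have hpj0 : 0 < p j := hpj.pos
  have hNi : N / p i = p j * M := by
    rw [hNdecomp, Nat.mul_div_cancel_left _ hpi0]
  have hNj : N / p j = p i * M := by
    rw [hNdecomp, show p i * (p j * M) = p j * (p i * M) by ring,
      Nat.mul_div_cancel_left _ hpj0]
  have hNij : N / (p i * p j) = M := by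
    rw [hNdecomp, ← Nat.mul_assoc, Nat.mul_div_cancel_left _ (by positivity)]
  rw [hNi, hNj, hNij, hNdecomp]
  calc a * (p j * M) + b * (p i * M) = (a * p j + b * p i) * M := by ring
    _ = (p i * p j + 1) * M := by rw [hkey]
    _ = p i * (p j * M) + M := by ring
end

section
/- Let N = p₁⋯pₙ be a product of distinct primes with deg P_N < N, fix an index i, and let 0 < k < N_i = N/p_i be an integer such that k·N_i⁻¹ is not congruent modulo p_i to ∑_{j∈T}(p_j⁻¹ mod p_i) for any subset T ⊆ {1,…,n}\{i}. Then the coefficient of x^k in P_N(x) is zero. -/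
/-!
Dividing out, `P_N = (1 + X^{N_i} + ⋯ + X^{(p_i-1)N_i}) · ∏_{j<l} (1 - X^{N_{jl}}) ·
∏_{j≠i} (1 - X^{N_j})⁻¹`, so for `k < N_i` the coefficient `a_N(k)` only sees the last two
factors. Modulo `p_i`, every exponent of `(1 - X^{N_j})⁻¹ = ∑_t X^{t N_j}` (`j ≠ i`) and of
`1 - X^{N_{jl}}` (`i ∉ {j, l}`) vanishes, while `N_{ij} ≡ N_i p_j⁻¹`. Hence every exponent of
their product is `≡ N_i ∑_{j∈T} p_j⁻¹` for some `T ⊆ [n]∖{i}`, which `k` is not.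
-/

open Polynomial Finset

open scoped Pointwise PowerSeries

namespace PowerSeries

variable {R M : Type*}

section ExponentsIn

variable [AddCommMonoidWithOne M]

def ExponentsIn [Semiring R] (S : Set M) (f : R⟦X⟧) : Prop :=
  ∀ e, coeff e f ≠ 0 → (e : M) ∈ S

theorem exponentsIn_one [Semiring R] : ExponentsIn (0 : Set M) (1 : R⟦X⟧) := by
  intro e he
  obtain rfl : e = 0 := by by_contra h; simp [coeff_one, h] at he
  simp

theorem ExponentsIn.mul [Semiring R] {S T : Set M} {f g : R⟦X⟧} (hf : ExponentsIn S f)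
    (hg : ExponentsIn T g) : ExponentsIn (S + T) (f * g) := by
  intro e he
  rw [coeff_mul] at he
  obtain ⟨⟨a, b⟩, hab, hne⟩ := exists_ne_zero_of_sum_ne_zero he
  rw [← mem_antidiagonal.mp hab, Nat.cast_add]
  exact Set.add_mem_add (hf a (left_ne_zero_of_mul hne)) (hg b (right_ne_zero_of_mul hne))

theorem ExponentsIn.prod [CommSemiring R] {ι : Type*} {s : Finset ι} {S : ι → Set M}
    {f : ι → R⟦X⟧} (h : ∀ j ∈ s, ExponentsIn (S j) (f j)) :
    ExponentsIn (∑ j ∈ s, S j) (∏ j ∈ s, f j) := by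
  classical
  induction s using Finset.induction_on with
  | empty => simpa using exponentsIn_one
  | insert a s ha ih =>
    rw [sum_insert ha, prod_insert ha]
    exact (h a (mem_insert_self a s)).mul (ih fun j hj => h j (mem_insert_of_mem hj))

theorem exponentsIn_one_sub_X_pow [Ring R] (d : ℕ) :
    ExponentsIn ({0, (d : M)} : Set M) (1 - X ^ d : R⟦X⟧) := by
  intro e he
  by_cases h : e = d
  · simp [h]
  · obtain rfl : e = 0 := by by_contra h'; simp [coeff_X_pow, h, h'] at he
    simp

theorem exponentsIn_expand [CommRing R] {m : ℕ} (hm : m ≠ 0) (hmM : (m : M) = 0) (φ : R⟦X⟧) :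
    ExponentsIn (0 : Set M) (expand m hm φ) := by
  intro e he
  obtain ⟨t, rfl⟩ : m ∣ e := by_contra (he <| coeff_expand_of_not_dvd m hm φ ·)
  rw [Set.mem_zero, ← nsmul_one, mul_nsmul, nsmul_one, hmM, nsmul_zero]

end ExponentsIn

section Inverse

variable [CommRing R]

theorem expand_mk_one_mul_one_sub_X_pow {m : ℕ} (hm : m ≠ 0) :
    expand m hm (mk 1) * (1 - X ^ m : R⟦X⟧) = 1 := by
  simpa using congrArg (expand m hm) (mk_one_mul_one_sub_eq_one R)

theorem eq_mul_prod_expand_of_mul_prod_eq {ι : Type*} {s : Finset ι} {m : ι → ℕ}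
    (hm : ∀ j, m j ≠ 0) {P Q : R⟦X⟧} (h : P * ∏ j ∈ s, (1 - X ^ m j) = Q) :
    P = Q * ∏ j ∈ s, expand (m j) (hm j) (mk 1) := by
  rw [← h, mul_assoc, ← prod_mul_distrib,
    prod_eq_one fun j _ => by rw [mul_comm, expand_mk_one_mul_one_sub_X_pow], mul_one]

theorem X_pow_dvd_one_sub_X_pow_mul_expand_sub_one {m N : ℕ} (hm : m ≠ 0) (hmN : m ≤ N) :
    X ^ m ∣ (1 - X ^ N) * expand m hm (mk 1) - (1 : R⟦X⟧) := by
  rw [X_pow_dvd_iff]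
  intro e he
  rw [sub_mul, one_mul, map_sub, map_sub, coeff_X_pow_mul', if_neg (by omega), coeff_expand,
    coeff_one]
  by_cases he0 : e = 0
  · simp [he0]
  · have hme : ¬m ∣ e := fun h => he0 (Nat.eq_zero_of_dvd_of_lt h he)
    simp [he0, hme]

theorem coeff_mul_of_X_pow_dvd_sub_one {m k : ℕ} {f g : R⟦X⟧} (h : X ^ m ∣ f - 1)
    (hk : k < m) : coeff k (f * g) = coeff k g := by
  have := X_pow_dvd_iff.mp (dvd_mul_of_dvd_left h g) k hk
  rwa [sub_mul, one_mul, map_sub, sub_eq_zero] at this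

theorem coeff_eq_coeff_mul_prod_erase_expand {ι : Type*} [Fintype ι] [DecidableEq ι]
    {m : ι → ℕ} (hm : ∀ j, m j ≠ 0) {N : ℕ} {i : ι} (hmN : m i ≤ N) {P Q : R⟦X⟧}
    (h : P * ∏ j, (1 - X ^ m j) = (1 - X ^ N) * Q) {k : ℕ} (hk : k < m i) :
    coeff k P = coeff k (Q * ∏ j ∈ univ.erase i, expand (m j) (hm j) (mk 1)) := by
  rw [eq_mul_prod_expand_of_mul_prod_eq hm h, ← mul_prod_erase univ _ (mem_univ i),
    mul_mul_mul_comm, coeff_mul_of_X_pow_dvd_sub_one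
      (X_pow_dvd_one_sub_X_pow_mul_expand_sub_one (hm i) hmN) hk]

end Inverse

end PowerSeries

theorem Set.exists_subset_sum_eq_of_mem_sum_pair {ι M : Type*} [AddCommMonoid M]
    {s : Finset ι} {c : ι → M} {x : M} (hx : x ∈ ∑ j ∈ s, ({0, c j} : Set M)) :
    ∃ T ⊆ s, ∑ j ∈ T, c j = x := by
  classical
  obtain ⟨g, hg, rfl⟩ := (Set.mem_finsetSum _ _ _).mp hx
  refine ⟨s.filter (fun j => g j = c j), filter_subset _ _, ?_⟩
  rw [sum_filter]
  refine sum_congr rfl fun j hj => ?_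
  split_ifs with hgc
  · exact hgc.symm
  · exact ((hg hj).resolve_right hgc).symm

theorem Finset.sum_sum_Ioi_eq_sum_erase {ι M : Type*} [Fintype ι] [LinearOrder ι]
    [LocallyFiniteOrderTop ι] [LocallyFiniteOrderBot ι] [AddCommMonoid M] (h : ι → ι → M)
    (c : ι → M) (i : ι)
    (hi : ∀ l, i < l → h i l = c l) (hi' : ∀ j < i, h j i = c j)
    (h0 : ∀ j l, j < l → j ≠ i → l ≠ i → h j l = 0) :
    ∑ j, ∑ l ∈ Ioi j, h j l = ∑ j ∈ univ.erase i, c j := by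
  have row : ∀ j, ∑ l ∈ Ioi j, h j l =
      (if j = i then ∑ l ∈ Ioi i, c l else 0) + if j < i then c j else 0 := by
    intro j
    rcases lt_trichotomy j i with hj | rfl | hj
    · rw [if_neg hj.ne, if_pos hj, zero_add, ← hi' j hj]
      exact sum_eq_single_of_mem i (mem_Ioi.2 hj) fun l hl hli =>
        h0 j l (mem_Ioi.1 hl) hj.ne hli
    · rw [if_pos rfl, if_neg (lt_irrefl j), add_zero]
      exact sum_congr rfl fun l hl => hi l (mem_Ioi.1 hl)
    · rw [if_neg hj.ne', if_neg hj.not_gt, add_zero]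
      exact sum_eq_zero fun l hl => h0 j l (mem_Ioi.1 hl) hj.ne' (mem_Ioi.1 hl |>.trans' hj).ne'
  rw [sum_congr rfl fun j _ => row j, sum_add_distrib, sum_ite_eq', if_pos (mem_univ i),
    ← sum_filter, filter_gt_eq_Iio, ← sum_disjUnion (disjoint_Ioi_Iio i), Ioi_disjUnion_Iio,
    compl_singleton]

section PrimeProduct

variable {ι : Type*} {p : ι → ℕ}

theorem prime_dvd_prod_iff_mem (hp : ∀ k, (p k).Prime) (hinj : Function.Injective p)
    {t : Finset ι} {i : ι} : p i ∣ ∏ k ∈ t, p k ↔ i ∈ t := by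
  refine ⟨fun h => ?_, fun h => dvd_prod_of_mem p h⟩
  obtain ⟨k, hk, hik⟩ := ((hp i).prime.dvd_finsetProd_iff p).mp h
  rwa [hinj ((Nat.prime_dvd_prime_iff_eq (hp i) (hp k)).mp hik)]

theorem prod_div_eq_prod_erase [DecidableEq ι] {s : Finset ι} {j : ι} (hj : j ∈ s)
    (hpj : 0 < p j) :
    (∏ k ∈ s, p k) / p j = ∏ k ∈ s.erase j, p k :=
  Nat.div_eq_of_eq_mul_left hpj (prod_erase_mul s p hj).symm

variable [Fintype ι] [DecidableEq ι]

theorem natCast_prod_div_eq_zero (hp : ∀ k, 0 < p k) {i j : ι} (hji : j ≠ i) :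
    (((∏ k, p k) / p j : ℕ) : ZMod (p i)) = 0 := by
  rw [prod_div_eq_prod_erase (mem_univ j) (hp j), ZMod.natCast_eq_zero_iff]
  exact dvd_prod_of_mem p (mem_erase.2 ⟨hji.symm, mem_univ i⟩)

theorem natCast_prod_div_mul_eq_zero (hp : ∀ k, 0 < p k) {i j l : ι} (hjl : j ≠ l)
    (hji : j ≠ i) (hli : l ≠ i) : (((∏ k, p k) / (p j * p l) : ℕ) : ZMod (p i)) = 0 := by
  rw [← Nat.div_div_eq_div_mul, prod_div_eq_prod_erase (mem_univ j) (hp j),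
    prod_div_eq_prod_erase (mem_erase.2 ⟨hjl.symm, mem_univ l⟩) (hp l),
    ZMod.natCast_eq_zero_iff]
  exact dvd_prod_of_mem p (mem_erase.2 ⟨hli.symm, mem_erase.2 ⟨hji.symm, mem_univ i⟩⟩)

theorem natCast_prod_div_self_ne_zero (hp : ∀ k, (p k).Prime)
    (hinj : Function.Injective p) (i : ι) : (((∏ k, p k) / p i : ℕ) : ZMod (p i)) ≠ 0 := by
  rw [prod_div_eq_prod_erase (mem_univ i) (hp i).pos, Ne, ZMod.natCast_eq_zero_iff,
    prime_dvd_prod_iff_mem hp hinj]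
  exact notMem_erase i univ

theorem natCast_prod_div_mul_eq (hp : ∀ k, (p k).Prime) (hinj : Function.Injective p)
    {i j : ι} (hji : j ≠ i) :
    (((∏ k, p k) / (p i * p j) : ℕ) : ZMod (p i)) =
      ((∏ k, p k) / p i : ℕ) * (p j : ZMod (p i))⁻¹ := by
  have : Fact (p i).Prime := ⟨hp i⟩
  have hpj : (p j : ZMod (p i)) ≠ 0 := by
    rw [Ne, ZMod.natCast_eq_zero_iff, ← prod_singleton p j, prime_dvd_prod_iff_mem hp hinj]
    exact fun h => hji (mem_singleton.1 h).symm
  have hdvd : p j ∣ (∏ k, p k) / p i := by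
    rw [prod_div_eq_prod_erase (mem_univ i) (hp i).pos]
    exact dvd_prod_of_mem p (mem_erase.2 ⟨hji, mem_univ j⟩)
  rw [← Nat.div_div_eq_div_mul, eq_mul_inv_iff_mul_eq₀ hpj, ← Nat.cast_mul,
    Nat.div_mul_cancel hdvd]

end PrimeProduct

theorem exponentsIn_prod_prod_Ioi_one_sub_X_pow {ι R : Type*} [Fintype ι] [LinearOrder ι]
    [LocallyFiniteOrderTop ι] [LocallyFiniteOrderBot ι] [CommRing R] {p : ι → ℕ}
    (hp : ∀ k, (p k).Prime) (hinj : Function.Injective p) (i : ι) :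
    PowerSeries.ExponentsIn
      (∑ j ∈ univ.erase i, ({0, ((∏ k, p k) / p i : ℕ) * (p j : ZMod (p i))⁻¹} : Set _))
      (∏ j, ∏ l ∈ Ioi j, (1 - PowerSeries.X ^ ((∏ k, p k) / (p j * p l)) : R⟦X⟧)) := by
  rw [← sum_sum_Ioi_eq_sum_erase
    (fun j l => ({0, (((∏ k, p k) / (p j * p l) : ℕ) : ZMod (p i))} : Set _)) _ i]
  · exact PowerSeries.ExponentsIn.prod fun j _ => PowerSeries.ExponentsIn.prod fun l _ =>
      PowerSeries.exponentsIn_one_sub_X_pow _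
  · intro l hl
    rw [natCast_prod_div_mul_eq hp hinj hl.ne']
  · intro j hj
    rw [mul_comm, natCast_prod_div_mul_eq hp hinj hj.ne]
  · intro j l hjl hji hli
    rw [natCast_prod_div_mul_eq_zero (fun k => (hp k).pos) hjl.ne hji hli,
      Set.pair_eq_singleton, Set.singleton_zero]

theorem stmt16_general (n : ℕ) (p : Fin n → ℕ)
    (hp : ∀ k, (p k).Prime) (hinj : Function.Injective p)
    (N : ℕ) (hN : N = ∏ k, p k)
    (PN : Polynomial ℤ)
    (hPN : PN * ∏ k, (1 - X ^ (N / p k)) =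
      (1 - X ^ N) * ∏ k, ∏ l ∈ Finset.Ioi k, (1 - X ^ (N / (p k * p l))))
    (i : Fin n) (k : ℕ) (hk1 : k < N / p i)
    (hcong : ∀ T ∈ (Finset.univ.erase i : Finset (Fin n)).powerset,
      (k : ZMod (p i)) * ((N / p i : ℕ) : ZMod (p i))⁻¹ ≠
        ∑ j ∈ T, (p j : ZMod (p i))⁻¹) :
    PN.coeff k = 0 := by
  subst hN
  have : Fact (p i).Prime := ⟨hp i⟩
  have hpos : ∀ j, 0 < p j := fun j => (hp j).pos
  have hm : ∀ j, (∏ k, p k) / p j ≠ 0 := fun j => by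
    rw [prod_div_eq_prod_erase (mem_univ j) (hpos j)]
    exact (prod_pos fun k _ => hpos k).ne'
  have hcast := congrArg (coeToPowerSeries.ringHom (R := ℤ)) hPN
  simp only [map_mul, map_prod, map_sub, map_one, map_pow, coeToPowerSeries.ringHom_apply,
    coe_X] at hcast
  have hE : PowerSeries.ExponentsIn (0 : Set (ZMod (p i)))
      (∏ j ∈ univ.erase i, PowerSeries.expand _ (hm j) (PowerSeries.mk (1 : ℕ → ℤ))) := by
    simpa using PowerSeries.ExponentsIn.prod fun j hj => PowerSeries.exponentsIn_expand (hm j)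
      (natCast_prod_div_eq_zero hpos (mem_erase.1 hj).1) _
  by_contra hk
  rw [← coeff_coe, PowerSeries.coeff_eq_coeff_mul_prod_erase_expand hm (Nat.div_le_self _ _)
    hcast hk1] at hk
  obtain ⟨T, hT, hTk⟩ := Set.exists_subset_sum_eq_of_mem_sum_pair <| by
    simpa using ((exponentsIn_prod_prod_Ioi_one_sub_X_pow hp hinj i).mul hE) k hk
  refine hcong T (mem_powerset.2 hT) ?_
  rw [← hTk, ← mul_sum, mul_comm, inv_mul_cancel_left₀ (natCast_prod_div_self_ne_zero hp hinj i)]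

/-- Let `N = p₁⋯pₙ` be a product of distinct primes with `deg P_N < N`, fix an
index `i`, and let `0 < k < N_i = N/p_i` be such that `k·N_i⁻¹` is not
congruent modulo `p_i` to `∑_{j∈T}(p_j⁻¹ mod p_i)` for any
`T ⊆ [n]\{i}`. Then the coefficient of `x^k` in `P_N(x)` is zero. -/
theorem stmt16 (n : ℕ) (p : Fin n → ℕ)
    (hp : ∀ k, (p k).Prime) (hinj : Function.Injective p)
    (N : ℕ) (hN : N = ∏ k, p k)
    (PN : Polynomial ℤ)
    (hPN : PN * ∏ k, (1 - X ^ (N / p k)) =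
      (1 - X ^ N) * ∏ k, ∏ l ∈ Finset.Ioi k, (1 - X ^ (N / (p k * p l))))
    (hdeg : PN.natDegree < N)
    (i : Fin n) (k : ℕ) (hk0 : 0 < k) (hk1 : k < N / p i)
    (hcong : ∀ T ∈ (Finset.univ.erase i : Finset (Fin n)).powerset,
      (k : ZMod (p i)) * ((N / p i : ℕ) : ZMod (p i))⁻¹ ≠
        ∑ j ∈ T, (p j : ZMod (p i))⁻¹) :
    PN.coeff k = 0 :=
  stmt16_general n p hp hinj N hN PN hPN i k hk1 hcong
end
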